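/- arXiv:2309.06060 — 6 statements merged into one kernel-verified Lean document; each statement's English description precedes it below -/
import Mathlib

section
/- Balayage formula (2.6): Let N ∈ ℕ₊ and let f : (0,∞) → H be continuously differentiable with compact support in (0,∞). Then the functions t ↦ T′(Nt)(M₊(f)(t)) and s ↦ T′(Ns) f(s) are Bochner integrable on (0,∞), and ∫₀^∞ T′(Nt)(M₊(f)(t)) dt = (1/(N+1)) ∫₀^∞ T′(Ns) f(s) ds in H. In semigroup notation this is ∫₀^∞ A e^{-NtA} M₊(f)(t) dt = (1/(N+1)) ∫₀^∞ A e^{-NsA} f(s) ds. -/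
open MeasureTheory Filter Topology Set

/-!
Write `T′ = -A e^{-tA}`. Differentiating the semigroup law gives `T′(a) T′(b) = T″(a + b)`, so
applying `T′(Nt)` to the principal value defining `M₊ f(t)` yields `-∫₀ᵗ T″((N+1)t - s) f(s) ds`.
The kernel `T″((N+1)t - s) f(s)`, `0 < s < t`, is dominated by `M₂ (Nt)⁻² ‖f(s)‖` and vanishes
unless `t > s ≥ δ` for some `δ > 0`, so Fubini applies; for fixed `s` the `t`-integral equals
`-(N+1)⁻¹ T′(Ns) f(s)` by the fundamental theorem of calculus, because `‖T′(u)‖ ≤ M₁ / u → 0`.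
-/

theorem tendsto_setIntegral_Ioo_sub_nhdsGT {E : Type*} [NormedAddCommGroup E] [NormedSpace ℝ E]
    {φ : ℝ → E} {a b : ℝ} (hφ : IntegrableOn φ (Ioo a b)) :
    Tendsto (fun ε => ∫ s in Ioo a (b - ε), φ s) (𝓝[>] 0) (𝓝 (∫ s in Ioo a b, φ s)) := by
  have hsub : ∀ ε : ℝ, 0 < ε → Ioo a (b - ε) ⊆ Ioo a b := fun ε hε =>
    Ioo_subset_Ioo_right (by linarith)
  simp_rw [← integral_indicator measurableSet_Ioo]
  refine tendsto_integral_filter_of_dominated_convergence _ ?_ ?_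
    ((integrable_indicator_iff measurableSet_Ioo).mpr hφ).norm ?_
  · filter_upwards [self_mem_nhdsWithin] with ε hε
    exact ((hφ.mono_set (hsub ε hε)).integrable_indicator measurableSet_Ioo).aestronglyMeasurable
  · filter_upwards [self_mem_nhdsWithin] with ε hε
    exact Eventually.of_forall (norm_indicator_le_of_subset (hsub ε hε) φ)
  · refine Eventually.of_forall fun s => ?_
    by_cases hs : s ∈ Ioo a b
    · rw [indicator_of_mem hs]
      refine tendsto_const_nhds.congr' ?_
      filter_upwards [Ioo_mem_nhdsGT (sub_pos.mpr hs.2)] with ε hε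
      exact (indicator_of_mem (show s ∈ Ioo a (b - ε) from ⟨hs.1, by linarith [hε.2]⟩) φ).symm
    · rw [indicator_of_notMem hs]
      refine tendsto_const_nhds.congr' ?_
      filter_upwards [self_mem_nhdsWithin] with ε hε
      exact (indicator_of_notMem (fun h => hs (hsub ε hε h)) φ).symm

section SemigroupDerivatives

variable {E : Type*} [NormedAddCommGroup E] [NormedSpace ℂ E]
  {T : ℝ → E →L[ℂ] E} {Tk : ℕ → ℝ → E →L[ℂ] E}

theorem Tk_one_add_eq_comp (hTadd : ∀ s t : ℝ, 0 ≤ s → 0 ≤ t → T (s + t) = (T s).comp (T t))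
    (hTk0 : ∀ t : ℝ, 0 < t → Tk 0 t = T t)
    (hTk0deriv : ∀ t : ℝ, 0 < t → HasDerivAt (Tk 0) (Tk 1 t) t)
    {a b : ℝ} (ha : 0 < a) (hb : 0 < b) :
    Tk 1 (a + b) = (T a).comp (Tk 1 b) := by
  have hleft : HasDerivAt (fun u => Tk 0 (a + u)) (Tk 1 (a + b)) b :=
    (hTk0deriv (a + b) (by positivity)).comp_const_add a b
  have hright : HasDerivAt (fun u => (T a).comp (Tk 0 u)) ((T a).comp (Tk 1 b)) b :=
    (((ContinuousLinearMap.compL ℂ E E E) (T a)).restrictScalars ℝ).hasFDerivAt.comp_hasDerivAt b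
      (hTk0deriv b hb)
  refine hleft.unique (hright.congr_of_eventuallyEq ?_)
  filter_upwards [eventually_gt_nhds hb] with u hu
  rw [hTk0 _ (by positivity), hTk0 u hu, hTadd a u ha.le hu.le]

theorem Tk_two_add_eq_comp (hTadd : ∀ s t : ℝ, 0 ≤ s → 0 ≤ t → T (s + t) = (T s).comp (T t))
    (hTk0 : ∀ t : ℝ, 0 < t → Tk 0 t = T t)
    (hTkderiv : ∀ (k : ℕ) (t : ℝ), 0 < t → HasDerivAt (Tk k) (Tk (k + 1) t) t)
    {a b : ℝ} (ha : 0 < a) (hb : 0 < b) :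
    Tk 2 (a + b) = (Tk 1 a).comp (Tk 1 b) := by
  have hleft : HasDerivAt (fun u => Tk 1 (u + b)) (Tk 2 (a + b)) a :=
    (hTkderiv 1 (a + b) (by positivity)).comp_add_const a b
  have hright : HasDerivAt (fun u => (Tk 0 u).comp (Tk 1 b)) ((Tk 1 a).comp (Tk 1 b)) a :=
    (((ContinuousLinearMap.compL ℂ E E E).flip (Tk 1 b)).restrictScalars ℝ).hasFDerivAt
      |>.comp_hasDerivAt a (hTkderiv 0 a ha)
  refine hleft.unique (hright.congr_of_eventuallyEq ?_)
  filter_upwards [eventually_gt_nhds ha] with u hu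
  rw [Tk_one_add_eq_comp hTadd hTk0 (hTkderiv 0) hu hb, hTk0 u hu]

end SemigroupDerivatives

section Decay

variable {E : Type*} [NormedAddCommGroup E] [NormedSpace ℂ E] {S S' : ℝ → E →L[ℂ] E} {M M' : ℝ}

theorem tendsto_apply_atTop_zero_of_norm_le_div (hS : ∀ u, 0 < u → ‖S u‖ ≤ M / u) (x : E) :
    Tendsto (fun u => S u x) atTop (𝓝 0) := by
  refine squeeze_zero_norm' ?_ ((tendsto_const_nhds (x := M * ‖x‖)).div_atTop tendsto_id)
  filter_upwards [eventually_gt_atTop 0] with u hu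
  calc ‖S u x‖ ≤ ‖S u‖ * ‖x‖ := (S u).le_opNorm x
    _ ≤ M / u * ‖x‖ := by gcongr; exact hS u hu
    _ = M * ‖x‖ / u := div_mul_eq_mul_div _ _ _

theorem norm_apply_affine_le (hdecay' : ∀ u, 0 < u → ‖S' u‖ ≤ M' / u ^ 2) {r s t : ℝ}
    (hr : 0 < r) (hs : 0 < s) (hst : s < t) (x : E) :
    ‖S' ((r + 1) * t - s) x‖ ≤ M' / r ^ 2 * t ^ (-2 : ℝ) * ‖x‖ := by
  have ht : 0 < t := hs.trans hst
  have harg : r * t ≤ (r + 1) * t - s := by linarith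
  have hM' : 0 ≤ M' := by simpa using (norm_nonneg _).trans (hdecay' 1 one_pos)
  calc ‖S' ((r + 1) * t - s) x‖ ≤ ‖S' ((r + 1) * t - s)‖ * ‖x‖ := (S' _).le_opNorm x
    _ ≤ M' / ((r + 1) * t - s) ^ 2 * ‖x‖ := by
      gcongr; exact hdecay' _ ((mul_pos hr ht).trans_le harg)
    _ ≤ M' / (r * t) ^ 2 * ‖x‖ := by gcongr
    _ = M' / r ^ 2 * t ^ (-2 : ℝ) * ‖x‖ := by
      rw [Real.rpow_neg ht.le, Real.rpow_two]; field_simp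

theorem integrableOn_Ioi_apply_affine (hcont' : ContinuousOn S' (Ioi 0))
    (hdecay' : ∀ u, 0 < u → ‖S' u‖ ≤ M' / u ^ 2) {r s : ℝ} (hr : 0 < r) (hs : 0 < s) (x : E) :
    IntegrableOn (fun t => S' ((r + 1) * t - s) x) (Ioi s) := by
  have hpos : ∀ t ∈ Ioi s, 0 < (r + 1) * t - s := fun t ht => by nlinarith [ht.out]
  have hdom : IntegrableOn (fun t : ℝ => M' / r ^ 2 * t ^ (-2 : ℝ) * ‖x‖) (Ioi s) :=
    ((integrableOn_Ioi_rpow_of_lt (by norm_num) hs).const_mul _).mul_const _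
  refine hdom.mono' ((ContinuousOn.clm_apply (hcont'.comp (by fun_prop) hpos)
    continuousOn_const).aestronglyMeasurable measurableSet_Ioi) ?_
  filter_upwards [ae_restrict_mem measurableSet_Ioi] with t ht
  exact norm_apply_affine_le hdecay' hr hs ht x

theorem integral_Ioi_apply_affine [CompleteSpace E] (hS : ∀ u, 0 < u → HasDerivAt S (S' u) u)
    (hdecay : ∀ u, 0 < u → ‖S u‖ ≤ M / u) (hcont' : ContinuousOn S' (Ioi 0))
    (hdecay' : ∀ u, 0 < u → ‖S' u‖ ≤ M' / u ^ 2) {r s : ℝ} (hr : 0 < r) (hs : 0 < s) (x : E) :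
    ∫ t in Ioi s, S' ((r + 1) * t - s) x = -((r + 1)⁻¹ • S (r * s) x) := by
  have hderiv : ∀ t ∈ Ici s, HasDerivAt (fun t => (r + 1)⁻¹ • S ((r + 1) * t - s) x)
      (S' ((r + 1) * t - s) x) t := by
    intro t ht
    have hu : 0 < (r + 1) * t - s := by nlinarith [ht.out]
    have hlin : HasDerivAt (fun t => (r + 1) * t - s) (r + 1) t := by
      simpa using ((hasDerivAt_id t).const_mul (r + 1)).sub_const s
    have happ : HasDerivAt (fun u => S u x) (S' ((r + 1) * t - s) x) ((r + 1) * t - s) :=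
      ((ContinuousLinearMap.apply ℂ E x).restrictScalars ℝ).hasFDerivAt.comp_hasDerivAt _ (hS _ hu)
    convert (happ.scomp t hlin).const_smul (r + 1)⁻¹ using 1
    · rfl
    rw [smul_smul, inv_mul_cancel₀ (by positivity : r + 1 ≠ 0), one_smul]
  have hlim : Tendsto (fun t => (r + 1)⁻¹ • S ((r + 1) * t - s) x) atTop (𝓝 0) := by
    have harg : Tendsto (fun t => (r + 1) * t - s) atTop atTop :=
      tendsto_atTop_add_const_right _ _ (tendsto_id.const_mul_atTop (by positivity))
    simpa using ((tendsto_apply_atTop_zero_of_norm_le_div hdecay x).comp harg).const_smul (r + 1)⁻¹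
  rw [integral_Ioi_of_hasDerivAt_of_tendsto' hderiv
    (integrableOn_Ioi_apply_affine hcont' hdecay' hr hs x) hlim, zero_sub]
  ring_nf

end Decay

theorem HasCompactSupport.exists_pos_forall_lt_eq_zero {M : Type*} [Zero M] {f : ℝ → M}
    (hfc : HasCompactSupport f) (hfs : tsupport f ⊆ Ioi 0) : ∃ δ > 0, ∀ s < δ, f s = 0 := by
  rcases (tsupport f).eq_empty_or_nonempty with h | h
  · exact ⟨1, one_pos, fun s _ => image_eq_zero_of_notMem_tsupport (by simp [h])⟩
  obtain ⟨δ, hδ, hδmin⟩ := hfc.isCompact.exists_isLeast h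
  exact ⟨δ, hfs hδ, fun s hs => image_eq_zero_of_notMem_tsupport fun h => (hδmin h).not_gt hs⟩

section Kernel

variable {E : Type*} [NormedAddCommGroup E] [NormedSpace ℂ E] {S S' : ℝ → E →L[ℂ] E} {M M' : ℝ}

theorem apply_principalValue_eq_neg_integral [CompleteSpace E] (hcont : ContinuousOn S (Ioi 0))
    (hcont' : ContinuousOn S' (Ioi 0))
    (hcomp : ∀ a b, 0 < a → 0 < b → S' (a + b) = (S a).comp (S b))
    {f : ℝ → E} (hf : Continuous f) {r t : ℝ} {y : E} (hr : 0 < r) (ht : 0 < t)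
    (hy : Tendsto (fun ε => -∫ s in Ioo 0 (t - ε), S (t - s) (f s)) (𝓝[>] 0) (𝓝 y)) :
    S (r * t) y = -∫ s in Ioo 0 t, S' ((r + 1) * t - s) (f s) := by
  have htrunc : ∀ ε ∈ Ioo 0 t, S (r * t) (-∫ s in Ioo 0 (t - ε), S (t - s) (f s))
      = -∫ s in Ioo 0 (t - ε), S' ((r + 1) * t - s) (f s) := by
    rintro ε ⟨hε, -⟩
    have hint : IntegrableOn (fun s => S (t - s) (f s)) (Ioo 0 (t - ε)) :=
      (((hcont.comp (by fun_prop) fun s hs => mem_Ioi.mpr (by linarith [hs.2])).clm_apply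
        hf.continuousOn).integrableOn_Icc).mono_set Ioo_subset_Icc_self
    rw [map_neg, ← (S (r * t)).integral_comp_comm hint]
    refine congrArg _ (setIntegral_congr_fun measurableSet_Ioo fun s hs => ?_)
    rw [show (r + 1) * t - s = r * t + (t - s) by ring,
      hcomp _ _ (by positivity) (by linarith [hs.2])]
    rfl
  have hint : IntegrableOn (fun s => S' ((r + 1) * t - s) (f s)) (Ioo 0 t) :=
    (((hcont'.comp (by fun_prop) fun s hs => mem_Ioi.mpr (by nlinarith [hs.2])).clm_apply
      hf.continuousOn).integrableOn_Icc).mono_set Ioo_subset_Icc_self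
  refine tendsto_nhds_unique ?_ (tendsto_setIntegral_Ioo_sub_nhdsGT hint).neg
  refine (((S (r * t)).continuous.tendsto y).comp hy).congr' ?_
  filter_upwards [Ioo_mem_nhdsGT ht] with ε hε
  exact htrunc ε hε

noncomputable def balayageKernel (S : ℝ → E →L[ℂ] E) (r : ℝ) (f : ℝ → E) : ℝ × ℝ → E :=
  {p : ℝ × ℝ | 0 < p.2 ∧ p.2 < p.1}.indicator fun p => S ((r + 1) * p.1 - p.2) (f p.2)

theorem integral_balayageKernel_left (S : ℝ → E →L[ℂ] E) (r : ℝ) (f : ℝ → E) (t : ℝ) :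
    ∫ s, balayageKernel S r f (t, s) = ∫ s in Ioo 0 t, S ((r + 1) * t - s) (f s) := by
  rw [← integral_indicator measurableSet_Ioo]
  rfl

theorem integral_balayageKernel_right [CompleteSpace E] (hS : ∀ u, 0 < u → HasDerivAt S (S' u) u)
    (hdecay : ∀ u, 0 < u → ‖S u‖ ≤ M / u) (hcont' : ContinuousOn S' (Ioi 0))
    (hdecay' : ∀ u, 0 < u → ‖S' u‖ ≤ M' / u ^ 2) {r : ℝ} (hr : 0 < r) {f : ℝ → E}
    (hf0 : ∀ s ≤ 0, f s = 0) (s : ℝ) :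
    ∫ t, balayageKernel S' r f (t, s) = -((r + 1)⁻¹ • S (r * s) (f s)) := by
  rcases le_or_gt s 0 with hs | hs
  · simp [balayageKernel, indicator, hf0 s hs]
  have hslice : (fun t => balayageKernel S' r f (t, s))
      = (Ioi s).indicator fun t => S' ((r + 1) * t - s) (f s) := by
    ext t
    simp [balayageKernel, indicator, hs]
  rw [hslice, integral_indicator measurableSet_Ioi,
    integral_Ioi_apply_affine hS hdecay hcont' hdecay' hr hs]

theorem integrable_balayageKernel (hcont' : ContinuousOn S' (Ioi 0))
    (hdecay' : ∀ u, 0 < u → ‖S' u‖ ≤ M' / u ^ 2) {r : ℝ} (hr : 0 < r) {f : ℝ → E}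
    (hf : Continuous f) (hfc : HasCompactSupport f) {δ : ℝ} (hδ : 0 < δ) (hfδ : ∀ s < δ, f s = 0) :
    Integrable (balayageKernel S' r f) (volume.prod volume) := by
  set U : Set (ℝ × ℝ) := {p | 0 < p.2 ∧ p.2 < p.1}
  have hU : IsOpen U :=
    (isOpen_lt continuous_const continuous_snd).inter (isOpen_lt continuous_snd continuous_fst)
  have hpos : ∀ p ∈ U, 0 < (r + 1) * p.1 - p.2 := fun p hp => by nlinarith [hp.1, hp.2]
  have hmeas : AEStronglyMeasurable (balayageKernel S' r f) (volume.prod volume) :=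
    (aestronglyMeasurable_indicator_iff hU.measurableSet).mpr
      ((ContinuousOn.clm_apply (hcont'.comp (by fun_prop) hpos)
        (hf.comp continuous_snd).continuousOn).aestronglyMeasurable hU.measurableSet)
  have hM' : 0 ≤ M' := by simpa using (norm_nonneg _).trans (hdecay' 1 one_pos)
  have hdom : Integrable
      (fun p : ℝ × ℝ => (Ioi δ).indicator (fun t => M' / r ^ 2 * t ^ (-2 : ℝ)) p.1 * ‖f p.2‖)
      (volume.prod volume) :=
    ((integrable_indicator_iff measurableSet_Ioi).mpr
      ((integrableOn_Ioi_rpow_of_lt (by norm_num) hδ).const_mul _)).mul_prod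
      (hf.integrable_of_hasCompactSupport hfc).norm
  refine hdom.mono' hmeas (Eventually.of_forall fun ⟨t, s⟩ => ?_)
  by_cases hts : (t, s) ∈ U
  swap
  · rw [balayageKernel, indicator_of_notMem hts, norm_zero]
    exact mul_nonneg (indicator_nonneg (fun t ht => mul_nonneg (by positivity)
      (Real.rpow_nonneg (hδ.trans ht).le _)) t) (norm_nonneg _)
  rcases lt_or_ge s δ with hsδ | hsδ
  · simp [balayageKernel, hfδ s hsδ]
  dsimp only
  rw [balayageKernel, indicator_of_mem hts, indicator_of_mem (mem_Ioi.mpr (hsδ.trans_lt hts.2))]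
  exact norm_apply_affine_le hdecay' hr hts.1 hts.2 _

theorem integral_Ioi_integral_balayageKernel [CompleteSpace E]
    (hS : ∀ u, 0 < u → HasDerivAt S (S' u) u) (hdecay : ∀ u, 0 < u → ‖S u‖ ≤ M / u)
    (hcont' : ContinuousOn S' (Ioi 0)) (hdecay' : ∀ u, 0 < u → ‖S' u‖ ≤ M' / u ^ 2) {r : ℝ}
    (hr : 0 < r) {f : ℝ → E} (hf : Continuous f) (hfc : HasCompactSupport f) {δ : ℝ} (hδ : 0 < δ)
    (hfδ : ∀ s < δ, f s = 0) :
    IntegrableOn (fun t => ∫ s, balayageKernel S' r f (t, s)) (Ioi 0) ∧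
    IntegrableOn (fun s => S (r * s) (f s)) (Ioi 0) ∧
    ∫ t in Ioi 0, ∫ s, balayageKernel S' r f (t, s)
      = -((r + 1)⁻¹ • ∫ s in Ioi 0, S (r * s) (f s)) := by
  set K := balayageKernel S' r f
  have hK : Integrable K (volume.prod volume) :=
    integrable_balayageKernel hcont' hdecay' hr hf hfc hδ hfδ
  have hf0 : ∀ s ≤ 0, f s = 0 := fun s hs => hfδ s (hs.trans_lt hδ)
  have hright : ∀ s, S (r * s) (f s) = -(r + 1) • ∫ t, K (t, s) := fun s => by
    rw [integral_balayageKernel_right hS hdecay hcont' hdecay' hr hf0, smul_neg, smul_smul, neg_mul,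
      mul_inv_cancel₀ (by positivity), neg_smul, one_smul, neg_neg]
  refine ⟨hK.integral_prod_left.integrableOn, ?_, ?_⟩
  · simp_rw [hright]
    exact (hK.integral_prod_right.smul _).integrableOn
  calc ∫ t in Ioi 0, ∫ s, K (t, s) = ∫ t, ∫ s, K (t, s) := by
        refine setIntegral_eq_integral_of_forall_compl_eq_zero fun t ht => ?_
        rw [integral_balayageKernel_left, Ioo_eq_empty (by simpa using ht), Measure.restrict_empty,
          integral_zero_measure]
    _ = ∫ s, ∫ t, K (t, s) := integral_integral_swap (f := fun t s => K (t, s)) hK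
    _ = -((r + 1)⁻¹ • ∫ s, S (r * s) (f s)) := by
        simp_rw [hright, integral_smul, smul_smul, mul_neg,
          inv_mul_cancel₀ (by positivity : r + 1 ≠ 0), neg_smul, one_smul, neg_neg]
    _ = -((r + 1)⁻¹ • ∫ s in Ioi 0, S (r * s) (f s)) := by
        rw [setIntegral_eq_integral_of_forall_compl_eq_zero fun s hs => by
          simp [hf0 s (not_lt.mp hs)]]

end Kernel

theorem balayage_formula_forward_general
    {H : Type*} [NormedAddCommGroup H] [InnerProductSpace ℂ H] [CompleteSpace H]
    (T : ℝ → H →L[ℂ] H) (Tk : ℕ → ℝ → H →L[ℂ] H)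
    (hTadd : ∀ s t : ℝ, 0 ≤ s → 0 ≤ t → T (s + t) = (T s).comp (T t))
    (hTk0 : ∀ t : ℝ, 0 < t → Tk 0 t = T t)
    (hTkderiv : ∀ (k : ℕ) (t : ℝ), 0 < t → HasDerivAt (Tk k) (Tk (k + 1) t) t)
    (hMk : ∀ k : ℕ, 1 ≤ k → ∃ M : ℝ, ∀ t : ℝ, 0 < t → t ^ k * ‖Tk k t‖ ≤ M)
    (N : ℕ) (hN : 1 ≤ N)
    (f : ℝ → H) (hf : ContDiff ℝ 1 f) (hfc : HasCompactSupport f)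
    (hfs : tsupport f ⊆ Ioi (0 : ℝ))
    -- `g = M₊(f)`, realized as the principal value limit
    (g : ℝ → H)
    (hg : ∀ t : ℝ, 0 < t →
      Tendsto (fun ε : ℝ => -∫ s in Ioo (0 : ℝ) (t - ε), (Tk 1 (t - s)) (f s))
        (𝓝[>] (0 : ℝ)) (𝓝 (g t))) :
    IntegrableOn (fun t : ℝ => (Tk 1 ((N : ℝ) * t)) (g t)) (Ioi 0) ∧
    IntegrableOn (fun s : ℝ => (Tk 1 ((N : ℝ) * s)) (f s)) (Ioi 0) ∧
    ∫ t in Ioi (0 : ℝ), (Tk 1 ((N : ℝ) * t)) (g t)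
      = (1 / (N + 1 : ℝ)) • ∫ s in Ioi (0 : ℝ), (Tk 1 ((N : ℝ) * s)) (f s) := by
  have hcont : ∀ k, ContinuousOn (Tk k) (Ioi 0) := fun k u hu =>
    (hTkderiv k u hu).continuousAt.continuousWithinAt
  have hdecay : ∀ k, 1 ≤ k → ∃ M : ℝ, ∀ u : ℝ, 0 < u → ‖Tk k u‖ ≤ M / u ^ k := fun k hk =>
    (hMk k hk).imp fun M hM u hu => (le_div_iff₀' (pow_pos hu k)).mpr (hM u hu)
  obtain ⟨M₁, hM₁⟩ := hdecay 1 le_rfl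
  obtain ⟨M₂, hM₂⟩ := hdecay 2 one_le_two
  simp only [pow_one] at hM₁
  obtain ⟨δ, hδ, hfδ⟩ := hfc.exists_pos_forall_lt_eq_zero hfs
  have hN' : (0 : ℝ) < N := by exact_mod_cast hN
  obtain ⟨hint, hint_f, hfubini⟩ := integral_Ioi_integral_balayageKernel (hTkderiv 1) hM₁ (hcont 2)
    hM₂ hN' hf.continuous hfc hδ hfδ
  have hleft : ∀ t ∈ Ioi 0,
      Tk 1 (N * t) (g t) = -∫ s, balayageKernel (Tk 2) N f (t, s) := fun t ht => by
    rw [integral_balayageKernel_left]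
    exact apply_principalValue_eq_neg_integral (hcont 1) (hcont 2)
      (fun a b => Tk_two_add_eq_comp hTadd hTk0 hTkderiv) hf.continuous hN' ht (hg t ht)
  refine ⟨hint.neg.congr_fun (fun t ht => (hleft t ht).symm) measurableSet_Ioi, hint_f, ?_⟩
  rw [setIntegral_congr_fun measurableSet_Ioi hleft, integral_neg, hfubini, neg_neg, one_div]

/-- Balayage formula (2.6): for `N ∈ ℕ₊` and `f` continuously differentiable with
compact support in `(0,∞)`, with `g = M₊(f)` the (principal-value) forward maximal
regularity operator applied to `f`, the functions `t ↦ T′(Nt)(M₊(f)(t))` and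
`s ↦ T′(Ns) f(s)` are Bochner integrable on `(0,∞)` and
`∫₀^∞ T′(Nt)(M₊(f)(t)) dt = (1/(N+1)) • ∫₀^∞ T′(Ns) f(s) ds`. -/
theorem balayage_formula_forward
    {H : Type*} [NormedAddCommGroup H] [InnerProductSpace ℂ H] [CompleteSpace H]
    (T : ℝ → H →L[ℂ] H) (Tk : ℕ → ℝ → H →L[ℂ] H)
    (hT0 : T 0 = ContinuousLinearMap.id ℂ H)
    (hTadd : ∀ s t : ℝ, 0 ≤ s → 0 ≤ t → T (s + t) = (T s).comp (T t))
    (hTcont : ∀ x : H, ContinuousOn (fun t : ℝ => T t x) (Ici (0 : ℝ)))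
    (hTk0 : ∀ t : ℝ, 0 < t → Tk 0 t = T t)
    (hTkderiv : ∀ (k : ℕ) (t : ℝ), 0 < t → HasDerivAt (Tk k) (Tk (k + 1) t) t)
    (hMk : ∀ k : ℕ, 1 ≤ k → ∃ M : ℝ, ∀ t : ℝ, 0 < t → t ^ k * ‖Tk k t‖ ≤ M)
    (hM0 : ∃ M : ℝ, ∀ t : ℝ, 0 ≤ t → ‖T t‖ ≤ M)
    (N : ℕ) (hN : 1 ≤ N)
    (f : ℝ → H) (hf : ContDiff ℝ 1 f) (hfc : HasCompactSupport f)
    (hfs : tsupport f ⊆ Ioi (0 : ℝ))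
    -- `g = M₊(f)`, realized as the principal value limit
    (g : ℝ → H)
    (hg : ∀ t : ℝ, 0 < t →
      Tendsto (fun ε : ℝ => -∫ s in Ioo (0 : ℝ) (t - ε), (Tk 1 (t - s)) (f s))
        (𝓝[>] (0 : ℝ)) (𝓝 (g t))) :
    IntegrableOn (fun t : ℝ => (Tk 1 ((N : ℝ) * t)) (g t)) (Ioi 0) ∧
    IntegrableOn (fun s : ℝ => (Tk 1 ((N : ℝ) * s)) (f s)) (Ioi 0) ∧
    ∫ t in Ioi (0 : ℝ), (Tk 1 ((N : ℝ) * t)) (g t)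
      = (1 / (N + 1 : ℝ)) • ∫ s in Ioi (0 : ℝ), (Tk 1 ((N : ℝ) * s)) (f s) :=
  balayage_formula_forward_general T Tk hTadd hTk0 hTkderiv hMk N hN f hf hfc hfs g hg
end

section
/- Balayage formula (2.7): Let N ∈ ℕ₊ and let f : (0,∞) → H be continuously differentiable with compact support in (0,∞). Then the functions t ↦ t^N · T⁽ᴺ⁾(t)(M₋(f)(t)) and s ↦ s^{N+1} · T⁽ᴺ⁺¹⁾(s) f(s) are Bochner integrable on (0,∞), and ∫₀^∞ t^N T⁽ᴺ⁾(t)(M₋(f)(t)) dt = -(1/(N+1)) ∫₀^∞ s^{N+1} T⁽ᴺ⁺¹⁾(s) f(s) ds in H. In semigroup notation this is ∫₀^∞ (tA)^N e^{-tA} M₋(f)(t) dt = (1/(N+1)) ∫₀^∞ (sA)^{N+1} e^{-sA} f(s) ds. -/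
/-!
Integrating by parts in the principal value turns `M₋ f (t)` into
`f t + ∫_t^∞ T(s - t) f'(s) ds`; the limit `ε → 0⁺` is harmless because `T` is bounded and strongly
continuous at `0`. Applying `T⁽ᴺ⁾(t)` and using `T⁽ᴺ⁾(t) T(s - t) = T⁽ᴺ⁾(s)` gives
`T⁽ᴺ⁾(t) M₋ f (t) = T⁽ᴺ⁾(t) f(t) + ∫_t^∞ T⁽ᴺ⁾(s) f'(s) ds`. Against `t^N dt`, the tail integral
contributes `(N+1)⁻¹ ∫ s^(N+1) T⁽ᴺ⁾(s) f'(s) ds` (integrate `t^N` by parts), and integrating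
`d/ds (s^(N+1) T⁽ᴺ⁾(s) f(s))` over `(0, ∞)` expresses the sum through
`∫ s^(N+1) T⁽ᴺ⁺¹⁾(s) f(s) ds`. As `f` is supported in a compact subset of `(0, ∞)`, every integrand
is continuous and vanishes beyond `supp f`, which settles all integrability questions.
-/

open MeasureTheory Filter Topology Set

section RealFunctions

variable {E : Type*} [NormedAddCommGroup E]

theorem HasCompactSupport.eventuallyEq_zero_atTop {F : ℝ → E} (hF : HasCompactSupport F) :
    F =ᶠ[atTop] 0 :=
  (hasCompactSupport_iff_eventuallyEq.1 hF).filter_mono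
    (coclosedCompact_eq_cocompact (X := ℝ) ▸ atTop_le_cocompact)

theorem integrableOn_Ioi_of_continuousOn_Ici {F : ℝ → E} {a : ℝ} (hF : ContinuousOn F (Ici a))
    (h_top : F =ᶠ[atTop] 0) : IntegrableOn F (Ioi a) := by
  obtain ⟨b, hb⟩ := eventually_atTop.1 h_top
  have hF_Icc : ContinuousOn F (Icc a b) := hF.mono Icc_subset_Ici_self
  refine hF_Icc.integrableOn_Icc.of_forall_sdiff_eq_zero measurableSet_Ioi fun x hx => hb x ?_
  by_contra! hxb
  exact hx.2 ⟨le_of_lt hx.1, hxb.le⟩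

variable [NormedSpace ℝ E]

theorem continuousWithinAt_integral_Ioi {φ : ℝ → E} {a : ℝ} (hφ : IntegrableOn φ (Ioi a)) :
    ContinuousWithinAt (fun y => ∫ s in Ioi y, φ s) (Ici a) a := by
  have h_prim : ContinuousWithinAt (fun y => ∫ s in a..y, φ s) (Ici a) a := by
    refine (continuousWithinAt_Icc_iff_Ici (lt_add_one a)).1
      (intervalIntegral.continuousWithinAt_primitive (measure_singleton a) ?_)
    rw [min_self, max_eq_right (lt_add_one a).le, intervalIntegrable_iff_integrableOn_Ioc_of_le
      (lt_add_one a).le]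
    exact hφ.mono_set Ioc_subset_Ioi_self
  refine ContinuousWithinAt.congr (h_prim.const_sub (∫ s in Ioi a, φ s)) (fun y hy => ?_) ?_
  · rw [← intervalIntegral.integral_Ioi_sub_Ioi hφ hy, sub_sub_cancel]
  · rw [intervalIntegral.integral_same, sub_zero]

variable [CompleteSpace E]

theorem hasDerivAt_integral_Ioi {φ : ℝ → E} (hφ : Continuous φ) (hφi : Integrable φ) (x : ℝ) :
    HasDerivAt (fun y => ∫ s in Ioi y, φ s) (-φ x) x := by
  have h_eq : (fun y => ∫ s in Ioi y, φ s) = fun y => (∫ s in Ioi 0, φ s) - ∫ s in 0..y, φ s := by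
    funext y
    rw [← intervalIntegral.integral_Ioi_sub_Ioi' hφi.integrableOn hφi.integrableOn, sub_sub_cancel]
  rw [h_eq]
  exact ((hφ.integral_hasStrictDerivAt 0 x).hasDerivAt).const_sub _

theorem integral_Ioi_pow_smul_integral_Ioi {φ : ℝ → E} (hφ : Continuous φ)
    (hφc : HasCompactSupport φ) (N : ℕ) :
    IntegrableOn (fun t => t ^ N • ∫ s in Ioi t, φ s) (Ioi 0) ∧
      ∫ t in Ioi 0, t ^ N • ∫ s in Ioi t, φ s =
        ((N : ℝ) + 1)⁻¹ • ∫ t in Ioi 0, t ^ (N + 1) • φ t := by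
  set G : ℝ → E := fun y => ∫ s in Ioi y, φ s
  have hG : ∀ x, HasDerivAt G (-φ x) x :=
    hasDerivAt_integral_Ioi hφ (hφ.integrable_of_hasCompactSupport hφc)
  have hG_cont : Continuous G := continuous_iff_continuousAt.2 fun x => (hG x).continuousAt
  have hG_top : G =ᶠ[atTop] 0 := by
    obtain ⟨b, hb⟩ := eventually_atTop.1 hφc.eventuallyEq_zero_atTop
    filter_upwards [eventually_ge_atTop b] with y hy
    exact setIntegral_eq_zero_of_forall_eq_zero fun s hs => hb s (hy.trans (le_of_lt hs))
  have h_int₁ : IntegrableOn (fun t => t ^ N • G t) (Ioi 0) :=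
    integrableOn_Ioi_of_continuousOn_Ici ((continuous_pow N).smul hG_cont).continuousOn
      (hG_top.mono fun y hy => by simp [hy])
  have h_int₂ : IntegrableOn (fun t => t ^ (N + 1) • φ t) (Ioi 0) :=
    (((continuous_pow _).smul hφ).integrable_of_hasCompactSupport hφc.smul_left).integrableOn
  refine ⟨h_int₁, ?_⟩
  set c : ℝ := ((N : ℝ) + 1)⁻¹
  have h_deriv : ∀ t ∈ Ioi (0 : ℝ), HasDerivAt (fun t => c • t ^ (N + 1) • G t)
      (t ^ N • G t - c • t ^ (N + 1) • φ t) t := by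
    intro t _
    convert (((hasDerivAt_pow (N + 1) t).smul (hG t)).const_smul c) using 1
    · rfl
    · have hc : c * ((N : ℝ) + 1) = 1 := inv_mul_cancel₀ (by positivity)
      rw [Nat.add_sub_cancel, Nat.cast_succ, smul_add, smul_neg, smul_neg, smul_smul, smul_smul,
        ← mul_assoc, hc, one_mul]
      abel
  have h_top : Tendsto (fun t => c • t ^ (N + 1) • G t) atTop (𝓝 0) :=
    tendsto_const_nhds.congr' (hG_top.mono fun y hy => by simp [hy])
  have h_cont : ContinuousWithinAt (fun t => c • t ^ (N + 1) • G t) (Ici 0) 0 :=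
    (((continuous_pow _).smul hG_cont).const_smul c).continuousWithinAt
  have h_int₂' : IntegrableOn (fun t => c • t ^ (N + 1) • φ t) (Ioi 0) := h_int₂.smul c
  have h_ftc := integral_Ioi_of_hasDerivAt_of_tendsto h_cont h_deriv (h_int₁.sub h_int₂') h_top
  rw [integral_sub h_int₁ h_int₂', integral_smul] at h_ftc
  simpa [sub_eq_zero] using h_ftc

end RealFunctions

section ClmApply

variable {𝕜 : Type*} [NontriviallyNormedField 𝕜] {E F : Type*} [NormedAddCommGroup E]
  [NormedSpace 𝕜 E] [NormedAddCommGroup F] [NormedSpace 𝕜 F] {X : Type*}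

theorem support_clm_apply_subset (A : X → E →L[𝕜] F) (v : X → E) :
    Function.support (fun x => A x (v x)) ⊆ Function.support v :=
  Function.support_subset_iff'.2 fun x hx => by rw [Function.notMem_support.1 hx, map_zero]

variable [TopologicalSpace X]

theorem ContinuousOn.clm_apply_of_norm_le {A : X → E →L[𝕜] F} {u : X → E} {s : Set X} {M : ℝ}
    (hA : ∀ v, ContinuousOn (fun x => A x v) s) (hM : ∀ x ∈ s, ‖A x‖ ≤ M)
    (hu : ContinuousOn u s) : ContinuousOn (fun x => A x (u x)) s := by
  intro x hx
  have h_small : Tendsto (fun y => A y (u y - u x)) (𝓝[s] x) (𝓝 0) := by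
    have h_bound : Tendsto (fun y => M * ‖u y - u x‖) (𝓝[s] x) (𝓝 0) := by
      simpa using (((hu x hx).tendsto.sub_const (u x)).norm.const_mul M)
    refine squeeze_zero_norm' ?_ h_bound
    filter_upwards [self_mem_nhdsWithin] with y hy
    exact (A y).le_of_opNorm_le (hM y hy) _
  simpa [ContinuousWithinAt] using h_small.add (hA (u x) x hx)

theorem ContinuousOn.continuous_clm_apply_of_tsupport_subset {A : X → E →L[𝕜] F} {v : X → E}
    {U : Set X} (hA : ContinuousOn A U) (hU : IsOpen U) (hv : Continuous v)
    (hvU : tsupport v ⊆ U) : Continuous fun x => A x (v x) :=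
  (hA.clm_apply hv.continuousOn).continuous_of_tsupport_subset hU
    ((closure_mono (support_clm_apply_subset A v)).trans hvU)

theorem HasCompactSupport.clm_apply (A : X → E →L[𝕜] F) {v : X → E} (hv : HasCompactSupport v) :
    HasCompactSupport fun x => A x (v x) :=
  hv.mono (support_clm_apply_subset A v)

theorem integrable_pow_smul_clm_apply [NormedSpace ℝ F] {B : ℝ → E →L[𝕜] F}
    (hB : ContinuousOn B (Ioi 0)) {v : ℝ → E} (hv : Continuous v) (hvc : HasCompactSupport v)
    (hv_pos : tsupport v ⊆ Ioi 0) (k : ℕ) : Integrable fun s => s ^ k • B s (v s) :=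
  ((continuous_pow k).smul (hB.continuous_clm_apply_of_tsupport_subset isOpen_Ioi hv hv_pos)
    ).integrable_of_hasCompactSupport (hvc.clm_apply B).smul_left

end ClmApply

/-- `HasDerivAt.clm_apply` needs the maps to be linear over the field of differentiation, so the
`𝕜`-linear family is differentiated through `restrictScalars ℝ`. -/
theorem HasDerivAt.clm_apply_of_isScalarTower {𝕜 : Type*} [RCLike 𝕜] {E F : Type*}
    [NormedAddCommGroup E] [NormedSpace 𝕜 E] [NormedSpace ℝ E] [IsScalarTower ℝ 𝕜 E]
    [NormedAddCommGroup F] [NormedSpace 𝕜 F] [NormedSpace ℝ F] [IsScalarTower ℝ 𝕜 F]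
    {c : ℝ → E →L[𝕜] F} {c' : E →L[𝕜] F} {u : ℝ → E} {u' : E} {t : ℝ} (hc : HasDerivAt c c' t)
    (hu : HasDerivAt u u' t) : HasDerivAt (fun s => c s (u s)) (c' (u t) + c t u') t := by
  have hc_real : HasDerivAt (fun s => (c s).restrictScalars ℝ) (c'.restrictScalars ℝ) t :=
    (ContinuousLinearMap.restrictScalarsL 𝕜 E F ℝ ℝ).hasFDerivAt.comp_hasDerivAt t hc
  exact hc_real.clm_apply hu

section IntegrationByParts

variable {𝕜 : Type*} [RCLike 𝕜] {E : Type*} [NormedAddCommGroup E] [NormedSpace 𝕜 E]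
  [NormedSpace ℝ E] [IsScalarTower ℝ 𝕜 E] [CompleteSpace E]

theorem integral_Ioi_pow_smul_clm_apply_deriv {A A' : ℝ → E →L[𝕜] E}
    (hA : ∀ s, 0 < s → HasDerivAt A (A' s) s) (hA' : ContinuousOn A' (Ioi 0)) {u : ℝ → E}
    (hu : ContDiff ℝ 1 u) (huc : HasCompactSupport u) (hu_pos : tsupport u ⊆ Ioi 0) (N : ℕ) :
    ∫ s in Ioi 0, s ^ (N + 1) • A' s (u s) =
      -(((N : ℝ) + 1) • (∫ s in Ioi 0, s ^ N • A s (u s)) +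
        ∫ s in Ioi 0, s ^ (N + 1) • A s (deriv u s)) := by
  have hA_cont : ContinuousOn A (Ioi 0) := fun s hs => (hA s hs).continuousAt.continuousWithinAt
  have h_int₀ := integrable_pow_smul_clm_apply hA_cont hu.continuous huc hu_pos N
  have h_int₁ := integrable_pow_smul_clm_apply hA' hu.continuous huc hu_pos (N + 1)
  have h_int₂ := integrable_pow_smul_clm_apply hA_cont (hu.continuous_deriv le_rfl) huc.deriv
    (tsupport_deriv_subset.trans hu_pos) (N + 1)
  have h_deriv : ∀ s ∈ Ioi (0 : ℝ), HasDerivAt (fun s => s ^ (N + 1) • A s (u s))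
      (((N : ℝ) + 1) • s ^ N • A s (u s) +
        (s ^ (N + 1) • A' s (u s) + s ^ (N + 1) • A s (deriv u s))) s := by
    intro s hs
    convert (hasDerivAt_pow (N + 1) s).smul
      ((hA s hs).clm_apply_of_isScalarTower (hu.differentiable one_ne_zero s).hasDerivAt) using 1
    · rfl
    rw [Nat.add_sub_cancel, Nat.cast_succ, smul_smul, smul_add, add_comm]
  have h_cont : Continuous fun s => s ^ (N + 1) • A s (u s) :=
    (continuous_pow _).smul (hA_cont.continuous_clm_apply_of_tsupport_subset isOpen_Ioi
      hu.continuous hu_pos)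
  have h_int₀' : Integrable fun s => ((N : ℝ) + 1) • s ^ N • A s (u s) := h_int₀.smul _
  have h_int₁₂ : Integrable fun s => s ^ (N + 1) • A' s (u s) + s ^ (N + 1) • A s (deriv u s) :=
    h_int₁.add h_int₂
  have h_ftc := integral_Ioi_of_hasDerivAt_of_tendsto h_cont.continuousWithinAt h_deriv
    (h_int₀'.add h_int₁₂).integrableOn
    ((huc.clm_apply A).smul_left.is_zero_at_infty.mono_left atTop_le_cocompact)
  rw [integral_add h_int₀'.integrableOn h_int₁₂.integrableOn,
    integral_add h_int₁.integrableOn h_int₂.integrableOn, integral_smul,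
    zero_pow (Nat.succ_ne_zero N), zero_smul, sub_zero] at h_ftc
  linear_combination (norm := module) h_ftc

end IntegrationByParts

section Semigroup

variable {𝕜 : Type*} [RCLike 𝕜] {E : Type*} [NormedAddCommGroup E] [NormedSpace 𝕜 E]
  {T : ℝ → E →L[𝕜] E} {Tk : ℕ → ℝ → E →L[𝕜] E}

theorem continuousOn_Ici_comp_sub_apply
    (hTcont : ∀ x : E, ContinuousOn (fun t : ℝ => T t x) (Ici (0 : ℝ)))
    (hM0 : ∃ M : ℝ, ∀ t : ℝ, 0 ≤ t → ‖T t‖ ≤ M) {v : ℝ → E} (hv : Continuous v) (t : ℝ) :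
    ContinuousOn (fun s => T (s - t) (v s)) (Ici t) := by
  obtain ⟨M, hM⟩ := hM0
  refine ContinuousOn.clm_apply_of_norm_le (fun w => ?_) (fun s hs => hM _ (sub_nonneg.2 hs))
    hv.continuousOn
  exact (hTcont w).comp (continuous_sub_right t).continuousOn
    fun s hs => mem_Ici.2 (sub_nonneg.2 hs)

theorem integrableOn_Ioi_comp_sub_apply
    (hTcont : ∀ x : E, ContinuousOn (fun t : ℝ => T t x) (Ici (0 : ℝ)))
    (hM0 : ∃ M : ℝ, ∀ t : ℝ, 0 ≤ t → ‖T t‖ ≤ M) {v : ℝ → E} (hv : Continuous v)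
    (hvc : HasCompactSupport v) (t : ℝ) : IntegrableOn (fun s => T (s - t) (v s)) (Ioi t) :=
  integrableOn_Ioi_of_continuousOn_Ici (continuousOn_Ici_comp_sub_apply hTcont hM0 hv t)
    (hvc.clm_apply fun s => T (s - t)).eventuallyEq_zero_atTop

variable [NormedSpace ℝ E] [IsScalarTower ℝ 𝕜 E]

theorem semigroupDeriv_add_apply
    (hTadd : ∀ s t : ℝ, 0 ≤ s → 0 ≤ t → T (s + t) = (T s).comp (T t))
    (hTk0 : ∀ t : ℝ, 0 < t → Tk 0 t = T t)
    (hTkderiv : ∀ (k : ℕ) (t : ℝ), 0 < t → HasDerivAt (Tk k) (Tk (k + 1) t) t)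
    (k : ℕ) {t u : ℝ} (ht : 0 < t) (hu : 0 < u) (x : E) : Tk k (t + u) x = Tk k t (T u x) := by
  induction k generalizing t with
  | zero => rw [hTk0 _ (add_pos ht hu), hTk0 _ ht, hTadd t u ht.le hu.le]; rfl
  | succ k ih =>
    -- differentiate the identity for `k` in `t`
    have h_shift : HasDerivAt (fun s => Tk k (s + u) x) (Tk (k + 1) (t + u) x) t := by
      simpa using ((hTkderiv k (t + u) (add_pos ht hu)).comp_add_const t u
        ).clm_apply_of_isScalarTower (hasDerivAt_const t x)
    have h_comp : HasDerivAt (fun s => Tk k s (T u x)) (Tk (k + 1) t (T u x)) t := by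
      simpa using (hTkderiv k t ht).clm_apply_of_isScalarTower (hasDerivAt_const t (T u x))
    refine h_shift.unique (h_comp.congr_of_eventuallyEq ?_)
    filter_upwards [Ioi_mem_nhds ht] with s hs
    exact ih hs

variable [CompleteSpace E]

theorem neg_integral_Ioi_semigroupDeriv_one_apply
    (hTcont : ∀ x : E, ContinuousOn (fun t : ℝ => T t x) (Ici (0 : ℝ)))
    (hTk0 : ∀ t : ℝ, 0 < t → Tk 0 t = T t)
    (hTkderiv : ∀ (k : ℕ) (t : ℝ), 0 < t → HasDerivAt (Tk k) (Tk (k + 1) t) t)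
    (hM0 : ∃ M : ℝ, ∀ t : ℝ, 0 ≤ t → ‖T t‖ ≤ M)
    {f : ℝ → E} (hf : ContDiff ℝ 1 f) (hfc : HasCompactSupport f) {t x : ℝ} (htx : t < x) :
    -∫ s in Ioi x, Tk 1 (s - t) (f s) = T (x - t) (f x) + ∫ s in Ioi x, T (s - t) (deriv f s) := by
  have h_deriv : ∀ s ∈ Ioi x, HasDerivAt (fun s => T (s - t) (f s))
      (Tk 1 (s - t) (f s) + T (s - t) (deriv f s)) s := by
    intro s hs
    have hT_deriv : HasDerivAt (fun s => T (s - t)) (Tk 1 (s - t)) s := by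
      refine ((hTkderiv 0 _ (sub_pos.2 (htx.trans hs))).comp_sub_const s t).congr_of_eventuallyEq ?_
      filter_upwards [Ioi_mem_nhds (htx.trans hs)] with r hr
      exact (hTk0 _ (sub_pos.2 hr)).symm
    exact hT_deriv.clm_apply_of_isScalarTower (hf.differentiable one_ne_zero s).hasDerivAt
  have h_int₁ : IntegrableOn (fun s => Tk 1 (s - t) (f s)) (Ioi x) := by
    refine integrableOn_Ioi_of_continuousOn_Ici (ContinuousOn.clm_apply (fun s hs => ?_)
      hf.continuous.continuousOn) (hfc.clm_apply _).eventuallyEq_zero_atTop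
    exact ((hTkderiv 1 _ (sub_pos.2 (htx.trans_le hs))).continuousAt.comp (f := fun s => s - t)
      (continuous_sub_right t).continuousAt).continuousWithinAt
  have h_int₂ : IntegrableOn (fun s => T (s - t) (deriv f s)) (Ioi x) :=
    (integrableOn_Ioi_comp_sub_apply hTcont hM0 (hf.continuous_deriv le_rfl) hfc.deriv t).mono_set
      (Ioi_subset_Ioi htx.le)
  have h_cont : ContinuousWithinAt (fun s => T (s - t) (f s)) (Ici x) x :=
    ((continuousOn_Ici_comp_sub_apply hTcont hM0 hf.continuous t) x htx.le).mono
      (Ici_subset_Ici.2 htx.le)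
  have h_ftc := integral_Ioi_of_hasDerivAt_of_tendsto h_cont h_deriv (h_int₁.add h_int₂)
    ((hfc.clm_apply _).is_zero_at_infty.mono_left atTop_le_cocompact)
  rw [integral_add h_int₁ h_int₂, zero_sub] at h_ftc
  linear_combination (norm := module) -h_ftc

theorem eq_add_integral_Ioi_of_tendsto_principalValue
    (hT0 : T 0 = ContinuousLinearMap.id 𝕜 E)
    (hTcont : ∀ x : E, ContinuousOn (fun t : ℝ => T t x) (Ici (0 : ℝ)))
    (hTk0 : ∀ t : ℝ, 0 < t → Tk 0 t = T t)
    (hTkderiv : ∀ (k : ℕ) (t : ℝ), 0 < t → HasDerivAt (Tk k) (Tk (k + 1) t) t)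
    (hM0 : ∃ M : ℝ, ∀ t : ℝ, 0 ≤ t → ‖T t‖ ≤ M)
    {f : ℝ → E} (hf : ContDiff ℝ 1 f) (hfc : HasCompactSupport f) {t : ℝ} {y : E}
    (hy : Tendsto (fun ε : ℝ => -∫ s in Ioi (t + ε), (Tk 1 (s - t)) (f s)) (𝓝[>] 0) (𝓝 y)) :
    y = f t + ∫ s in Ioi t, T (s - t) (deriv f s) := by
  have h_int := integrableOn_Ioi_comp_sub_apply hTcont hM0 (hf.continuous_deriv le_rfl) hfc.deriv t
  have h_cont : ContinuousWithinAt
      (fun x => T (x - t) (f x) + ∫ s in Ioi x, T (s - t) (deriv f s)) (Ici t) t :=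
    (continuousOn_Ici_comp_sub_apply hTcont hM0 hf.continuous t t self_mem_Ici).add
      (continuousWithinAt_integral_Ioi h_int)
  have h_shift : Tendsto (fun ε : ℝ => t + ε) (𝓝[>] 0) (𝓝[>] t) := by
    have h_map := (Filter.map_add_left_nhdsGT (c := t) (a := (0 : ℝ))).le
    rwa [add_zero] at h_map
  have h_lim := (h_cont.mono Ioi_subset_Ici_self).tendsto.comp h_shift
  rw [sub_self, hT0, ContinuousLinearMap.id_apply] at h_lim
  refine tendsto_nhds_unique hy (h_lim.congr' ?_)
  filter_upwards [self_mem_nhdsWithin] with ε hε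
  exact (neg_integral_Ioi_semigroupDeriv_one_apply hTcont hTk0 hTkderiv hM0 hf hfc
    (lt_add_of_pos_right t hε)).symm

theorem semigroupDeriv_apply_eq_of_tendsto_principalValue
    (hT0 : T 0 = ContinuousLinearMap.id 𝕜 E)
    (hTadd : ∀ s t : ℝ, 0 ≤ s → 0 ≤ t → T (s + t) = (T s).comp (T t))
    (hTcont : ∀ x : E, ContinuousOn (fun t : ℝ => T t x) (Ici (0 : ℝ)))
    (hTk0 : ∀ t : ℝ, 0 < t → Tk 0 t = T t)
    (hTkderiv : ∀ (k : ℕ) (t : ℝ), 0 < t → HasDerivAt (Tk k) (Tk (k + 1) t) t)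
    (hM0 : ∃ M : ℝ, ∀ t : ℝ, 0 ≤ t → ‖T t‖ ≤ M)
    {f : ℝ → E} (hf : ContDiff ℝ 1 f) (hfc : HasCompactSupport f) (N : ℕ) {t : ℝ} (ht : 0 < t)
    {y : E}
    (hy : Tendsto (fun ε : ℝ => -∫ s in Ioi (t + ε), (Tk 1 (s - t)) (f s)) (𝓝[>] 0) (𝓝 y)) :
    Tk N t y = Tk N t (f t) + ∫ s in Ioi t, Tk N s (deriv f s) := by
  have h_int := integrableOn_Ioi_comp_sub_apply hTcont hM0 (hf.continuous_deriv le_rfl) hfc.deriv t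
  rw [eq_add_integral_Ioi_of_tendsto_principalValue hT0 hTcont hTk0 hTkderiv hM0 hf hfc hy,
    map_add, ← (Tk N t).integral_comp_comm h_int]
  congr 1
  refine setIntegral_congr_fun measurableSet_Ioi fun s hs => ?_
  rw [← semigroupDeriv_add_apply hTadd hTk0 hTkderiv N ht (sub_pos.2 hs), add_sub_cancel]

end Semigroup

theorem balayage_formula_backward_general
    {H : Type*} [NormedAddCommGroup H] [InnerProductSpace ℂ H] [CompleteSpace H]
    (T : ℝ → H →L[ℂ] H) (Tk : ℕ → ℝ → H →L[ℂ] H)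
    (hT0 : T 0 = ContinuousLinearMap.id ℂ H)
    (hTadd : ∀ s t : ℝ, 0 ≤ s → 0 ≤ t → T (s + t) = (T s).comp (T t))
    (hTcont : ∀ x : H, ContinuousOn (fun t : ℝ => T t x) (Ici (0 : ℝ)))
    (hTk0 : ∀ t : ℝ, 0 < t → Tk 0 t = T t)
    (hTkderiv : ∀ (k : ℕ) (t : ℝ), 0 < t → HasDerivAt (Tk k) (Tk (k + 1) t) t)
    (hM0 : ∃ M : ℝ, ∀ t : ℝ, 0 ≤ t → ‖T t‖ ≤ M)
    (N : ℕ)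
    (f : ℝ → H) (hf : ContDiff ℝ 1 f) (hfc : HasCompactSupport f)
    (hfs : tsupport f ⊆ Ioi (0 : ℝ))
    -- `g = M₋(f)`, realized as the principal value limit
    (g : ℝ → H)
    (hg : ∀ t : ℝ, 0 < t →
      Tendsto (fun ε : ℝ => -∫ s in Ioi (t + ε), (Tk 1 (s - t)) (f s))
        (𝓝[>] (0 : ℝ)) (𝓝 (g t))) :
    IntegrableOn (fun t : ℝ => t ^ N • (Tk N t) (g t)) (Ioi 0) ∧
    IntegrableOn (fun s : ℝ => s ^ (N + 1) • (Tk (N + 1) s) (f s)) (Ioi 0) ∧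
    ∫ t in Ioi (0 : ℝ), t ^ N • (Tk N t) (g t)
      = -((1 / (N + 1 : ℝ)) • ∫ s in Ioi (0 : ℝ), s ^ (N + 1) • (Tk (N + 1) s) (f s)) := by
  have hTk_cont : ∀ k, ContinuousOn (Tk k) (Ioi 0) := fun k t ht =>
    (hTkderiv k t ht).continuousAt.continuousWithinAt
  obtain ⟨h_tail_int, h_tail⟩ := integral_Ioi_pow_smul_integral_Ioi
    ((hTk_cont N).continuous_clm_apply_of_tsupport_subset isOpen_Ioi (hf.continuous_deriv le_rfl)
      (tsupport_deriv_subset.trans hfs)) (hfc.deriv.clm_apply (Tk N)) N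
  have h_int : IntegrableOn (fun t => t ^ N • Tk N t (f t)) (Ioi 0) :=
    (integrable_pow_smul_clm_apply (hTk_cont N) hf.continuous hfc hfs N).integrableOn
  have h_split : EqOn (fun t => t ^ N • Tk N t (g t))
      (fun t => t ^ N • Tk N t (f t) + t ^ N • ∫ s in Ioi t, Tk N s (deriv f s)) (Ioi 0) :=
    fun t ht => by
      dsimp only
      rw [semigroupDeriv_apply_eq_of_tendsto_principalValue hT0 hTadd hTcont hTk0 hTkderiv hM0 hf
        hfc N ht (hg t ht), smul_add]
  refine ⟨(h_int.add h_tail_int).congr_fun h_split.symm measurableSet_Ioi,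
    (integrable_pow_smul_clm_apply (hTk_cont (N + 1)) hf.continuous hfc hfs (N + 1)).integrableOn,
    ?_⟩
  rw [setIntegral_congr_fun measurableSet_Ioi h_split, integral_add h_int h_tail_int, h_tail,
    integral_Ioi_pow_smul_clm_apply_deriv (hTkderiv N) (hTk_cont (N + 1)) hf hfc hfs N]
  have hN : ((N : ℝ) + 1) ≠ 0 := by positivity
  rw [one_div, smul_neg, neg_neg, smul_add, smul_smul, inv_mul_cancel₀ hN, one_smul]

/-- Balayage formula (2.7): for `N ∈ ℕ₊` and `f` continuously differentiable with
compact support in `(0,∞)`, with `g = M₋(f)` the (principal-value) backward maximal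
regularity operator applied to `f`, the functions `t ↦ t^N • T⁽ᴺ⁾(t)(M₋(f)(t))` and
`s ↦ s^(N+1) • T⁽ᴺ⁺¹⁾(s) f(s)` are Bochner integrable on `(0,∞)` and
`∫₀^∞ t^N • T⁽ᴺ⁾(t)(M₋(f)(t)) dt = -(1/(N+1)) • ∫₀^∞ s^(N+1) • T⁽ᴺ⁺¹⁾(s) f(s) ds`. -/
theorem balayage_formula_backward
    {H : Type*} [NormedAddCommGroup H] [InnerProductSpace ℂ H] [CompleteSpace H]
    (T : ℝ → H →L[ℂ] H) (Tk : ℕ → ℝ → H →L[ℂ] H)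
    (hT0 : T 0 = ContinuousLinearMap.id ℂ H)
    (hTadd : ∀ s t : ℝ, 0 ≤ s → 0 ≤ t → T (s + t) = (T s).comp (T t))
    (hTcont : ∀ x : H, ContinuousOn (fun t : ℝ => T t x) (Ici (0 : ℝ)))
    (hTk0 : ∀ t : ℝ, 0 < t → Tk 0 t = T t)
    (hTkderiv : ∀ (k : ℕ) (t : ℝ), 0 < t → HasDerivAt (Tk k) (Tk (k + 1) t) t)
    (hMk : ∀ k : ℕ, 1 ≤ k → ∃ M : ℝ, ∀ t : ℝ, 0 < t → t ^ k * ‖Tk k t‖ ≤ M)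
    (hM0 : ∃ M : ℝ, ∀ t : ℝ, 0 ≤ t → ‖T t‖ ≤ M)
    (N : ℕ) (hN : 1 ≤ N)
    (f : ℝ → H) (hf : ContDiff ℝ 1 f) (hfc : HasCompactSupport f)
    (hfs : tsupport f ⊆ Ioi (0 : ℝ))
    -- `g = M₋(f)`, realized as the principal value limit
    (g : ℝ → H)
    (hg : ∀ t : ℝ, 0 < t →
      Tendsto (fun ε : ℝ => -∫ s in Ioi (t + ε), (Tk 1 (s - t)) (f s))
        (𝓝[>] (0 : ℝ)) (𝓝 (g t))) :
    IntegrableOn (fun t : ℝ => t ^ N • (Tk N t) (g t)) (Ioi 0) ∧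
    IntegrableOn (fun s : ℝ => s ^ (N + 1) • (Tk (N + 1) s) (f s)) (Ioi 0) ∧
    ∫ t in Ioi (0 : ℝ), t ^ N • (Tk N t) (g t)
      = -((1 / (N + 1 : ℝ)) • ∫ s in Ioi (0 : ℝ), s ^ (N + 1) • (Tk (N + 1) s) (f s)) :=
  balayage_formula_backward_general T Tk hT0 hTadd hTcont hTk0 hTkderiv hM0 N f hf hfc hfs g hg
end

section
/- Endpoint balayage formula (2.9): Let N ∈ ℕ₊ and let f : (0,∞) → H be continuously differentiable with compact support in (0,∞), and assume the trace condition ∫₀^∞ T′(s) f(s) ds = 0 (i.e. ∫₀^∞ A e^{-sA} f(s) ds = 0). Then the function t ↦ t^{N-1} · T⁽ᴺ⁾(t)(M₋(f)(t)) is Bochner integrable on (0,∞) and ∫₀^∞ t^{N-1} T⁽ᴺ⁾(t)(M₋(f)(t)) dt = -(1/N) ∫₀^∞ s^N T⁽ᴺ⁺¹⁾(s) f(s) ds in H. In semigroup notation this is ∫₀^∞ t^{N-1} A^N e^{-tA} M₋(f)(t) dt = (1/N) ∫₀^∞ s^N A^{N+1} e^{-sA} f(s) ds. -/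
open MeasureTheory Filter Topology Set

/-! Integrating by parts inside the principal value gives, for `t > 0`,
`M₋ f (t) = f t + ∫_t^∞ T(s - t) f'(s) ds`. As `T⁽ᴺ⁾(t) ∘ T(r) = T⁽ᴺ⁾(t + r)`, this turns into
`T⁽ᴺ⁾(t) M₋ f (t) = K(t) := T⁽ᴺ⁾(t) f(t) + ∫_t^∞ T⁽ᴺ⁾(s) f'(s) ds`.
The two `f'` terms cancel in `K' = T⁽ᴺ⁺¹⁾ f`, and `t^N / N • K(t)` vanishes at `t = 0` and for
large `t`, so integrating `t^(N-1) K(t)` by parts against `t^N / N` gives the formula. -/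

section RealLine

variable {E : Type*} [NormedAddCommGroup E] {v : ℝ → E} {a B : ℝ}

theorem HasCompactSupport.eventuallyEq_zero_atTop_s5 (hv : HasCompactSupport v) : v =ᶠ[atTop] 0 :=
  (hasCompactSupport_iff_eventuallyEq.1 hv).filter_mono
    (coclosedCompact_eq_cocompact (X := ℝ) ▸ atTop_le_cocompact)

theorem integrableOn_Ioi_of_continuousOn (hv : ContinuousOn v (Ici a)) (hv0 : v =ᶠ[atTop] 0) :
    IntegrableOn v (Ioi a) := by
  obtain ⟨B, hB⟩ := eventually_atTop.1 hv0
  exact ((hv.mono Icc_subset_Ici_self : ContinuousOn v (Icc a B)).integrableOn_Icc.mono_set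
    Ioc_subset_Icc_self).of_forall_sdiff_eq_zero measurableSet_Ioi
    fun s hs => hB s (not_le.mp fun h => hs.2 ⟨hs.1, h⟩).le

variable [NormedSpace ℝ E]

theorem setIntegral_Ioi_eq_intervalIntegral (hab : a ≤ B) (hB : ∀ s ≥ B, v s = 0) :
    ∫ s in Ioi a, v s = ∫ s in a..B, v s := by
  rw [intervalIntegral.integral_of_le hab, setIntegral_eq_of_subset_of_forall_sdiff_eq_zero
    measurableSet_Ioi Ioc_subset_Ioi_self
    fun s hs => hB s (not_le.mp fun h => hs.2 ⟨hs.1, h⟩).le]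

theorem continuousWithinAt_setIntegral_Ioi (hv : ContinuousOn v (Ici a))
    (hv0 : v =ᶠ[atTop] 0) : ContinuousWithinAt (fun c => ∫ s in Ioi c, v s) (Ici a) a := by
  obtain ⟨B, hB⟩ := eventually_atTop.1 hv0
  set B' := max B (a + 1)
  have haB' : a < B' := lt_max_of_lt_right (lt_add_one a)
  have hB' : ∀ s ≥ B', v s = 0 := fun s hs => hB s ((le_max_left _ _).trans hs)
  have hprim : ContinuousOn (fun c => ∫ s in c..B', v s) (Icc a B') := by
    rw [← uIcc_of_le haB'.le]
    exact intervalIntegral.continuousOn_primitive_interval_left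
      ((hv.mono Icc_subset_Ici_self).integrableOn_Icc.mono_set (by rw [uIcc_of_le haB'.le]))
  refine ((hprim a ⟨le_rfl, haB'.le⟩).mono_of_mem_nhdsWithin (Icc_mem_nhdsGE haB'))
    |>.congr_of_eventuallyEq ?_ (setIntegral_Ioi_eq_intervalIntegral haB'.le hB')
  filter_upwards [Icc_mem_nhdsGE haB'] with c hc
  exact setIntegral_Ioi_eq_intervalIntegral hc.2 hB'

theorem eventuallyEq_zero_atTop_of_hasDerivAt {φ φ' : ℝ → E} {c : ℝ}
    (hderiv : ∀ x ∈ Ici c, HasDerivAt φ (φ' x) x) (hφ0 : φ =ᶠ[atTop] 0) :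
    φ' =ᶠ[atTop] 0 := by
  obtain ⟨B, hB⟩ := eventually_atTop.1 hφ0
  filter_upwards [eventually_gt_atTop (max B c)] with s hs
  refine (hderiv s ((le_max_right B c).trans hs.le)).unique
    ((hasDerivAt_const s (0 : E)).congr_of_eventuallyEq ?_)
  filter_upwards [Ioi_mem_nhds ((le_max_left B c).trans_lt hs)] with y hy using hB y hy.out.le

variable [CompleteSpace E]

theorem hasDerivAt_setIntegral_Ioi (hv : Continuous v) (hv0 : v =ᶠ[atTop] 0) (x : ℝ) :
    HasDerivAt (fun c => ∫ s in Ioi c, v s) (-v x) x := by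
  obtain ⟨B, hB⟩ := eventually_atTop.1 hv0
  set B' := max B (x + 1)
  have hB' : ∀ s ≥ B', v s = 0 := fun s hs => hB s ((le_max_left _ _).trans hs)
  refine (intervalIntegral.integral_hasDerivAt_left (hv.intervalIntegrable x B')
    (hv.stronglyMeasurableAtFilter volume _) hv.continuousAt).congr_of_eventuallyEq ?_
  filter_upwards [Iio_mem_nhds (lt_max_of_lt_right (lt_add_one x))] with c hc
  exact setIntegral_Ioi_eq_intervalIntegral hc.le hB'

theorem integral_Ioi_eq_neg_of_hasDerivAt {φ φ' : ℝ → E} {c : ℝ}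
    (hderiv : ∀ x ∈ Ici c, HasDerivAt φ (φ' x) x) (hφ' : ContinuousOn φ' (Ici c))
    (hφ0 : φ =ᶠ[atTop] 0) : ∫ x in Ioi c, φ' x = -φ c := by
  rw [integral_Ioi_of_hasDerivAt_of_tendsto' hderiv (integrableOn_Ioi_of_continuousOn hφ'
    (eventuallyEq_zero_atTop_of_hasDerivAt hderiv hφ0))
    ((tendsto_const_nhds (x := (0 : E))).congr' hφ0.symm), zero_sub]

theorem integral_Ioi_pow_sub_one_smul_eq_neg_integral_pow_smul_deriv {K K' : ℝ → E}
    (hK : ∀ t ∈ Ici 0, HasDerivAt K (K' t) t) (hK' : ContinuousOn K' (Ici 0))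
    (hK0 : K =ᶠ[atTop] 0) {N : ℕ} (hN : N ≠ 0) :
    IntegrableOn (fun t => t ^ (N - 1) • K t) (Ioi 0) ∧
      ∫ t in Ioi 0, t ^ (N - 1) • K t
        = -((1 / (N : ℝ)) • ∫ t in Ioi 0, t ^ N • K' t) := by
  set w := fun t : ℝ => t ^ (N - 1) • K t
  set q := fun t : ℝ => t ^ N • K' t
  have hw : ContinuousOn w (Ici 0) :=
    (continuous_pow _).continuousOn.smul fun t ht => (hK t ht).continuousAt.continuousWithinAt
  have hq : ContinuousOn q (Ici 0) := (continuous_pow N).continuousOn.smul hK'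
  have hwi : IntegrableOn w (Ioi 0) :=
    integrableOn_Ioi_of_continuousOn hw (hK0.mono fun t ht => by simp [w, ht])
  have hqi : IntegrableOn q (Ioi 0) := integrableOn_Ioi_of_continuousOn hq
    ((eventuallyEq_zero_atTop_of_hasDerivAt hK hK0).mono fun t ht => by simp [q, ht])
  have hprim : ∀ t ∈ Ici 0,
      HasDerivAt (fun t : ℝ => (t ^ N / N) • K t) (w t + (1 / (N : ℝ)) • q t) t := by
    intro t ht
    refine (((hasDerivAt_pow N t).div_const (N : ℝ)).smul (hK t ht)).congr_deriv ?_
    simp only [w, q, smul_smul]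
    rw [mul_div_cancel_left₀ _ (Nat.cast_ne_zero.2 hN), one_div, inv_mul_eq_div, add_comm]
  have hftc := integral_Ioi_eq_neg_of_hasDerivAt hprim (hw.add (hq.const_smul _))
    (hK0.mono fun t ht => by simp [ht])
  rw [integral_add (f := w) (g := fun t => (1 / (N : ℝ)) • q t) hwi (hqi.smul _), integral_smul,
    zero_pow hN, zero_div, zero_smul, neg_zero] at hftc
  exact ⟨hwi, eq_neg_of_add_eq_zero_left hftc⟩

end RealLine

section OperatorFamilies

variable {𝕜 : Type*} [NontriviallyNormedField 𝕜] {E F X : Type*} [NormedAddCommGroup E]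
  [NormedSpace 𝕜 E] [NormedAddCommGroup F] [NormedSpace 𝕜 F] [TopologicalSpace X]
  {A : X → E →L[𝕜] F} {u : X → E}

theorem ContinuousOn.clm_apply_of_norm_le_s5 {s : Set X} {C : ℝ}
    (hA : ∀ e, ContinuousOn (fun y => A y e) s) (hAC : ∀ y ∈ s, ‖A y‖ ≤ C)
    (hu : ContinuousOn u s) : ContinuousOn (fun y => A y (u y)) s := by
  intro y₀ hy₀
  have hsmall : Tendsto (fun y => A y (u y - u y₀)) (𝓝[s] y₀) (𝓝 0) := by
    refine squeeze_zero_norm' ?_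
      (by simpa using ((hu y₀ hy₀).sub_const (u y₀)).norm.const_mul C)
    filter_upwards [self_mem_nhdsWithin] with y hy
    exact (A y).le_of_opNorm_le (hAC y hy) _
  simpa [ContinuousWithinAt] using hsmall.add (hA (u y₀) y₀ hy₀)

theorem tsupport_clm_apply_subset : tsupport (fun y => A y (u y)) ⊆ tsupport u :=
  closure_mono (Function.support_subset_iff'.mpr fun y hy => by
    rw [Function.notMem_support.mp hy, map_zero])

theorem continuous_clm_apply_of_forall_mem_tsupport (hA : ∀ x ∈ tsupport u, ContinuousAt A x)
    (hu : Continuous u) : Continuous fun y => A y (u y) :=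
  continuous_of_tsupport fun x hx =>
    (hA x (tsupport_clm_apply_subset hx)).clm_apply hu.continuousAt

theorem continuousOn_shift_apply {T : ℝ → E →L[𝕜] F} {M : ℝ}
    (hTcont : ∀ x, ContinuousOn (fun t => T t x) (Ici 0))
    (hTbound : ∀ t, 0 ≤ t → ‖T t‖ ≤ M) {u : ℝ → E} (hu : Continuous u) (t : ℝ) :
    ContinuousOn (fun s => T (s - t) (u s)) (Ici t) :=
  ContinuousOn.clm_apply_of_norm_le_s5
    (fun x => (hTcont x).comp (continuousOn_id.sub continuousOn_const)
      fun _ hs => mem_Ici.2 (sub_nonneg.2 hs))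
    (fun _ hs => hTbound _ (sub_nonneg.2 hs)) hu.continuousOn

end OperatorFamilies

section OperatorDerivatives

variable {𝕜 : Type*} [NontriviallyNormedField 𝕜] [NormedAlgebra ℝ 𝕜]
  {E F : Type*} [NormedAddCommGroup E] [NormedSpace 𝕜 E] [NormedSpace ℝ E]
  [IsScalarTower ℝ 𝕜 E] [NormedAddCommGroup F] [NormedSpace 𝕜 F] [NormedSpace ℝ F]
  [IsScalarTower ℝ 𝕜 F]
  {A : ℝ → E →L[𝕜] F} {u : ℝ → E}

theorem HasDerivAt.clm_apply_restrictScalars {A' : E →L[𝕜] F} {u' : E} {x : ℝ}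
    (hA : HasDerivAt A A' x) (hu : HasDerivAt u u' x) :
    HasDerivAt (fun s => A s (u s)) (A' (u x) + A x u') x :=
  ((ContinuousLinearMap.restrictScalarsL 𝕜 E F ℝ ℝ).hasFDerivAt.comp_hasDerivAt x hA).clm_apply
    hu

theorem hasDerivAt_clm_apply_of_forall_mem_tsupport {A' : ℝ → E →L[𝕜] F}
    (hA : ∀ x ∈ tsupport u, HasDerivAt A (A' x) x) (hu : Differentiable ℝ u) (x : ℝ) :
    HasDerivAt (fun s => A s (u s)) (A' x (u x) + A x (deriv u x)) x := by
  by_cases hx : x ∈ tsupport u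
  · exact (hA x hx).clm_apply_restrictScalars (hu x).hasDerivAt
  · have hu0 : u =ᶠ[𝓝 x] 0 := notMem_tsupport_iff_eventuallyEq.mp hx
    rw [hu0.eq_of_nhds, hu0.deriv_eq]
    simp only [Pi.zero_apply, map_zero, deriv_zero, add_zero]
    refine (hasDerivAt_const x (0 : F)).congr_of_eventuallyEq ?_
    filter_upwards [hu0] with s hs
    simp [hs]

end OperatorDerivatives

section Semigroup

variable {𝕜 : Type*} [RCLike 𝕜] {E : Type*} [NormedAddCommGroup E] [NormedSpace 𝕜 E]
  [NormedSpace ℝ E] [IsScalarTower ℝ 𝕜 E] {T : ℝ → E →L[𝕜] E} {Tk : ℕ → ℝ → E →L[𝕜] E} {M : ℝ}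
  {f : ℝ → E}

theorem hasDerivAt_of_derivativeFamily (hTk0 : ∀ t, 0 < t → Tk 0 t = T t)
    (hTkderiv : ∀ k t, 0 < t → HasDerivAt (Tk k) (Tk (k + 1) t) t) {t : ℝ} (ht : 0 < t) :
    HasDerivAt T (Tk 1 t) t :=
  (hTkderiv 0 t ht).congr_of_eventuallyEq <| by
    filter_upwards [Ioi_mem_nhds ht] with s hs using (hTk0 s hs).symm

theorem derivativeFamily_comp
    (hTadd : ∀ s t, 0 ≤ s → 0 ≤ t → T (s + t) = (T s).comp (T t))
    (hTk0 : ∀ t, 0 < t → Tk 0 t = T t)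
    (hTkderiv : ∀ k t, 0 < t → HasDerivAt (Tk k) (Tk (k + 1) t) t) (k : ℕ) {t r : ℝ}
    (ht : 0 < t) (hr : 0 < r) : (Tk k t).comp (T r) = Tk k (t + r) := by
  induction k generalizing t with
  | zero => rw [hTk0 t ht, hTk0 (t + r) (by positivity), hTadd t r ht.le hr.le]
  | succ k ih =>
    -- differentiate the identity for `k`, which holds on a neighbourhood of `t`
    have hleft : HasDerivAt (fun s => (Tk k s).comp (T r)) ((Tk (k + 1) t).comp (T r)) t :=
      (((ContinuousLinearMap.compL 𝕜 E E E).flip (T r)).restrictScalars ℝ).hasFDerivAt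
        |>.comp_hasDerivAt t (hTkderiv k t ht)
    have hright : HasDerivAt (fun s => Tk k (s + r)) (Tk (k + 1) (t + r)) t :=
      (hTkderiv k (t + r) (by positivity)).comp_add_const t r
    refine hleft.unique (hright.congr_of_eventuallyEq ?_)
    filter_upwards [Ioi_mem_nhds ht] with s hs using ih hs

variable [CompleteSpace E]

theorem neg_integral_Ioi_derivativeFamily_shift_apply
    (hTcont : ∀ x, ContinuousOn (fun t => T t x) (Ici 0))
    (hTbound : ∀ t, 0 ≤ t → ‖T t‖ ≤ M)
    (hTk0 : ∀ t, 0 < t → Tk 0 t = T t)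
    (hTkderiv : ∀ k t, 0 < t → HasDerivAt (Tk k) (Tk (k + 1) t) t)
    (hf : ContDiff ℝ 1 f) (hfc : HasCompactSupport f) {t c : ℝ} (htc : t < c) :
    -∫ s in Ioi c, Tk 1 (s - t) (f s)
      = T (c - t) (f c) + ∫ s in Ioi c, T (s - t) (deriv f s) := by
  have hf0 := hfc.eventuallyEq_zero_atTop_s5
  have hp : ContinuousOn (fun s => Tk 1 (s - t) (f s)) (Ici c) :=
    ContinuousOn.clm_apply (fun s hs => ((hTkderiv 1 _ (sub_pos.2 (htc.trans_le hs))).continuousAt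
      |>.comp (f := fun s => s - t) (continuous_sub_right t).continuousAt).continuousWithinAt)
      hf.continuous.continuousOn
  have hV : ContinuousOn (fun s => T (s - t) (deriv f s)) (Ici c) :=
    (continuousOn_shift_apply hTcont hTbound (hf.continuous_deriv le_rfl) t).mono
      (Ici_subset_Ici.2 htc.le)
  have hderiv : ∀ s ∈ Ici c, HasDerivAt (fun s => T (s - t) (f s))
      (Tk 1 (s - t) (f s) + T (s - t) (deriv f s)) s := fun s hs =>
    ((hasDerivAt_of_derivativeFamily hTk0 hTkderiv (sub_pos.2 (htc.trans_le hs))).comp_sub_const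
      s t).clm_apply_restrictScalars (hf.differentiable one_ne_zero s).hasDerivAt
  have hftc := integral_Ioi_eq_neg_of_hasDerivAt hderiv (hp.add hV)
    (hf0.mono fun s hs => by simp [hs])
  rw [integral_add (integrableOn_Ioi_of_continuousOn hp (hf0.mono fun s hs => by simp [hs]))
    (integrableOn_Ioi_of_continuousOn hV (hfc.deriv.eventuallyEq_zero_atTop_s5.mono
      fun s hs => by simp [hs])), eq_neg_iff_add_eq_zero] at hftc
  rw [neg_eq_iff_add_eq_zero, ← hftc]
  abel

theorem principalValue_tendsto (hT0 : T 0 = ContinuousLinearMap.id 𝕜 E)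
    (hTcont : ∀ x, ContinuousOn (fun t => T t x) (Ici 0))
    (hTbound : ∀ t, 0 ≤ t → ‖T t‖ ≤ M)
    (hTk0 : ∀ t, 0 < t → Tk 0 t = T t)
    (hTkderiv : ∀ k t, 0 < t → HasDerivAt (Tk k) (Tk (k + 1) t) t)
    (hf : ContDiff ℝ 1 f) (hfc : HasCompactSupport f) (t : ℝ) :
    Tendsto (fun ε => -∫ s in Ioi (t + ε), Tk 1 (s - t) (f s)) (𝓝[>] 0)
      (𝓝 (f t + ∫ s in Ioi t, T (s - t) (deriv f s))) := by
  have hlim : ContinuousWithinAt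
      (fun c => T (c - t) (f c) + ∫ s in Ioi c, T (s - t) (deriv f s)) (Ici t) t :=
    (continuousOn_shift_apply hTcont hTbound hf.continuous t t self_mem_Ici).add
      (continuousWithinAt_setIntegral_Ioi
        (continuousOn_shift_apply hTcont hTbound (hf.continuous_deriv le_rfl) t)
        (hfc.deriv.eventuallyEq_zero_atTop_s5.mono fun s hs => by simp [hs]))
  have hshift : Tendsto (fun ε => t + ε) (𝓝[>] 0) (𝓝[Ici t] t) := by
    refine tendsto_nhdsWithin_iff.2 ⟨?_, ?_⟩
    · exact ((continuous_const_add t).tendsto' 0 t (add_zero t)).mono_left nhdsWithin_le_nhds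
    · filter_upwards [self_mem_nhdsWithin] with ε (hε : 0 < ε) using by simp [hε.le]
  have hcomp := hlim.tendsto.comp hshift
  simp only [sub_self, hT0, ContinuousLinearMap.id_apply] at hcomp
  refine hcomp.congr' ?_
  filter_upwards [self_mem_nhdsWithin] with ε (hε : 0 < ε)
  rw [Function.comp_apply, neg_integral_Ioi_derivativeFamily_shift_apply hTcont hTbound hTk0
    hTkderiv hf hfc (lt_add_of_pos_right t hε), add_sub_cancel_left]

theorem derivativeFamily_apply_add_integral
    (hTadd : ∀ s t, 0 ≤ s → 0 ≤ t → T (s + t) = (T s).comp (T t))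
    (hTcont : ∀ x, ContinuousOn (fun t => T t x) (Ici 0))
    (hTbound : ∀ t, 0 ≤ t → ‖T t‖ ≤ M)
    (hTk0 : ∀ t, 0 < t → Tk 0 t = T t)
    (hTkderiv : ∀ k t, 0 < t → HasDerivAt (Tk k) (Tk (k + 1) t) t)
    (hf : ContDiff ℝ 1 f) (hfc : HasCompactSupport f) (k : ℕ) {t : ℝ} (ht : 0 < t) :
    Tk k t (f t + ∫ s in Ioi t, T (s - t) (deriv f s))
      = Tk k t (f t) + ∫ s in Ioi t, Tk k s (deriv f s) := by
  have hint : IntegrableOn (fun s => T (s - t) (deriv f s)) (Ioi t) :=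
    integrableOn_Ioi_of_continuousOn
      (continuousOn_shift_apply hTcont hTbound (hf.continuous_deriv le_rfl) t)
      (hfc.deriv.eventuallyEq_zero_atTop_s5.mono fun s hs => by simp [hs])
  rw [map_add, ← ContinuousLinearMap.integral_comp_comm _ hint]
  congr 1
  refine setIntegral_congr_fun measurableSet_Ioi fun s hs => ?_
  rw [← ContinuousLinearMap.comp_apply,
    derivativeFamily_comp hTadd hTk0 hTkderiv k ht (sub_pos.2 hs), add_sub_cancel]

end Semigroup

section Balayage

variable {𝕜 : Type*} [NontriviallyNormedField 𝕜] [NormedAlgebra ℝ 𝕜]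
  {E F : Type*} [NormedAddCommGroup E] [NormedSpace 𝕜 E] [NormedSpace ℝ E]
  [IsScalarTower ℝ 𝕜 E] [NormedAddCommGroup F] [NormedSpace 𝕜 F] [NormedSpace ℝ F]
  [IsScalarTower ℝ 𝕜 F] [CompleteSpace F] {A A' : ℝ → E →L[𝕜] F} {f : ℝ → E}

theorem hasDerivAt_clm_apply_add_integral_Ioi_deriv
    (hA : ∀ x ∈ tsupport f, HasDerivAt A (A' x) x) (hf : ContDiff ℝ 1 f)
    (hfc : HasCompactSupport f) (x : ℝ) :
    HasDerivAt (fun t => A t (f t) + ∫ s in Ioi t, A s (deriv f s)) (A' x (f x)) x := by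
  have hG : Continuous fun s => A s (deriv f s) :=
    continuous_clm_apply_of_forall_mem_tsupport
      (fun s hs => (hA s (tsupport_deriv_subset hs)).continuousAt) (hf.continuous_deriv le_rfl)
  have hG0 := hfc.deriv.eventuallyEq_zero_atTop_s5.mono fun s (hs : deriv f s = 0) =>
    show A s (deriv f s) = 0 by simp [hs]
  exact ((hasDerivAt_clm_apply_of_forall_mem_tsupport hA (hf.differentiable one_ne_zero) x).add
    (hasDerivAt_setIntegral_Ioi hG hG0 x)).congr_deriv (add_neg_cancel_right _ _)

theorem integral_pow_smul_clm_apply_add_integral_Ioi_deriv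
    (hA : ∀ t, 0 < t → HasDerivAt A (A' t) t) (hA' : ∀ t, 0 < t → ContinuousAt A' t)
    (hf : ContDiff ℝ 1 f) (hfc : HasCompactSupport f) (hfs : tsupport f ⊆ Ioi 0) {N : ℕ}
    (hN : N ≠ 0) :
    IntegrableOn (fun t => t ^ (N - 1) • (A t (f t) + ∫ s in Ioi t, A s (deriv f s)))
        (Ioi 0) ∧
      ∫ t in Ioi 0, t ^ (N - 1) • (A t (f t) + ∫ s in Ioi t, A s (deriv f s))
        = -((1 / (N : ℝ)) • ∫ t in Ioi 0, t ^ N • A' t (f t)) := by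
  have hK0 : (fun t => A t (f t) + ∫ s in Ioi t, A s (deriv f s)) =ᶠ[atTop] 0 := by
    obtain ⟨B, hB⟩ := eventually_atTop.1
      (hfc.eventuallyEq_zero_atTop_s5.and hfc.deriv.eventuallyEq_zero_atTop_s5)
    filter_upwards [eventually_ge_atTop B] with t ht
    have hG0 : ∀ s ∈ Ioi t, A s (deriv f s) = 0 := fun s hs => by
      simp [(hB s (ht.trans hs.out.le)).2]
    simp [(hB t ht).1, setIntegral_eq_zero_of_forall_eq_zero hG0]
  exact integral_Ioi_pow_sub_one_smul_eq_neg_integral_pow_smul_deriv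
    (fun t _ => hasDerivAt_clm_apply_add_integral_Ioi_deriv (fun x hx => hA x (hfs hx)) hf hfc t)
    (continuous_clm_apply_of_forall_mem_tsupport (fun x hx => hA' x (hfs hx))
      hf.continuous).continuousOn
    hK0 hN

end Balayage

theorem endpoint_balayage_formula_backward_general
    {H : Type*} [NormedAddCommGroup H] [InnerProductSpace ℂ H] [CompleteSpace H]
    (T : ℝ → H →L[ℂ] H) (Tk : ℕ → ℝ → H →L[ℂ] H)
    (hT0 : T 0 = ContinuousLinearMap.id ℂ H)
    (hTadd : ∀ s t : ℝ, 0 ≤ s → 0 ≤ t → T (s + t) = (T s).comp (T t))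
    (hTcont : ∀ x : H, ContinuousOn (fun t : ℝ => T t x) (Ici (0 : ℝ)))
    (hTk0 : ∀ t : ℝ, 0 < t → Tk 0 t = T t)
    (hTkderiv : ∀ (k : ℕ) (t : ℝ), 0 < t → HasDerivAt (Tk k) (Tk (k + 1) t) t)
    (hM0 : ∃ M : ℝ, ∀ t : ℝ, 0 ≤ t → ‖T t‖ ≤ M)
    (N : ℕ) (hN : 1 ≤ N)
    (f : ℝ → H) (hf : ContDiff ℝ 1 f) (hfc : HasCompactSupport f)
    (hfs : tsupport f ⊆ Ioi (0 : ℝ))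
    -- `g = M₋(f)`, realized as the principal value limit
    (g : ℝ → H)
    (hg : ∀ t : ℝ, 0 < t →
      Tendsto (fun ε : ℝ => -∫ s in Ioi (t + ε), (Tk 1 (s - t)) (f s))
        (𝓝[>] (0 : ℝ)) (𝓝 (g t))) :
    IntegrableOn (fun t : ℝ => t ^ (N - 1) • (Tk N t) (g t)) (Ioi 0) ∧
    ∫ t in Ioi (0 : ℝ), t ^ (N - 1) • (Tk N t) (g t)
      = -((1 / (N : ℝ)) • ∫ s in Ioi (0 : ℝ), s ^ N • (Tk (N + 1) s) (f s)) := by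
  obtain ⟨M, hM⟩ := hM0
  have hg_eq : EqOn (fun t : ℝ => t ^ (N - 1) • Tk N t (g t))
      (fun t => t ^ (N - 1) • (Tk N t (f t) + ∫ s in Ioi t, Tk N s (deriv f s))) (Ioi 0) := by
    intro t ht
    dsimp only
    rw [tendsto_nhds_unique (hg t ht)
        (principalValue_tendsto hT0 hTcont hM hTk0 hTkderiv hf hfc t),
      derivativeFamily_apply_add_integral hTadd hTcont hM hTk0 hTkderiv hf hfc N ht]
  obtain ⟨hint, hintegral⟩ := integral_pow_smul_clm_apply_add_integral_Ioi_deriv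
    (hTkderiv N) (fun t ht => (hTkderiv (N + 1) t ht).continuousAt) hf hfc hfs
    (Nat.one_le_iff_ne_zero.mp hN)
  exact ⟨hint.congr_fun hg_eq.symm measurableSet_Ioi,
    (setIntegral_congr_fun measurableSet_Ioi hg_eq).trans hintegral⟩

/-- Endpoint balayage formula (2.9): for `N ∈ ℕ₊` and `f` continuously differentiable
with compact support in `(0,∞)` satisfying the trace condition `∫₀^∞ T′(s) f(s) ds = 0`,
with `g = M₋(f)` the (principal-value) backward maximal regularity operator applied to
`f`, the function `t ↦ t^(N-1) • T⁽ᴺ⁾(t)(M₋(f)(t))` is Bochner integrable on `(0,∞)` and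
`∫₀^∞ t^(N-1) • T⁽ᴺ⁾(t)(M₋(f)(t)) dt = -(1/N) • ∫₀^∞ s^N • T⁽ᴺ⁺¹⁾(s) f(s) ds`. -/
theorem endpoint_balayage_formula_backward
    {H : Type*} [NormedAddCommGroup H] [InnerProductSpace ℂ H] [CompleteSpace H]
    (T : ℝ → H →L[ℂ] H) (Tk : ℕ → ℝ → H →L[ℂ] H)
    (hT0 : T 0 = ContinuousLinearMap.id ℂ H)
    (hTadd : ∀ s t : ℝ, 0 ≤ s → 0 ≤ t → T (s + t) = (T s).comp (T t))
    (hTcont : ∀ x : H, ContinuousOn (fun t : ℝ => T t x) (Ici (0 : ℝ)))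
    (hTk0 : ∀ t : ℝ, 0 < t → Tk 0 t = T t)
    (hTkderiv : ∀ (k : ℕ) (t : ℝ), 0 < t → HasDerivAt (Tk k) (Tk (k + 1) t) t)
    (hMk : ∀ k : ℕ, 1 ≤ k → ∃ M : ℝ, ∀ t : ℝ, 0 < t → t ^ k * ‖Tk k t‖ ≤ M)
    (hM0 : ∃ M : ℝ, ∀ t : ℝ, 0 ≤ t → ‖T t‖ ≤ M)
    (N : ℕ) (hN : 1 ≤ N)
    (f : ℝ → H) (hf : ContDiff ℝ 1 f) (hfc : HasCompactSupport f)
    (hfs : tsupport f ⊆ Ioi (0 : ℝ))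
    -- trace condition: `∫₀^∞ A e^{-sA} f(s) ds = -∫₀^∞ T′(s) f(s) ds = 0`
    (htrace : ∫ s in Ioi (0 : ℝ), (Tk 1 s) (f s) = 0)
    -- `g = M₋(f)`, realized as the principal value limit
    (g : ℝ → H)
    (hg : ∀ t : ℝ, 0 < t →
      Tendsto (fun ε : ℝ => -∫ s in Ioi (t + ε), (Tk 1 (s - t)) (f s))
        (𝓝[>] (0 : ℝ)) (𝓝 (g t))) :
    IntegrableOn (fun t : ℝ => t ^ (N - 1) • (Tk N t) (g t)) (Ioi 0) ∧
    ∫ t in Ioi (0 : ℝ), t ^ (N - 1) • (Tk N t) (g t)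
      = -((1 / (N : ℝ)) • ∫ s in Ioi (0 : ℝ), s ^ N • (Tk (N + 1) s) (f s)) :=
  endpoint_balayage_formula_backward_general T Tk hT0 hTadd hTcont hTk0 hTkderiv hM0 N hN f hf hfc
    hfs g hg
end

section
/- Higher-order square function estimate (3.1): For every N ∈ ℕ₊ there exists a constant C_N > 0, depending only on N, C and M₁, such that for all h ∈ H: ∫₀^∞ s^{2N-1} ‖T⁽ᴺ⁾(s) h‖² ds ≤ C_N ‖h‖². (In semigroup notation this is the square function estimate ∫₀^∞ ‖(sA)^N e^{-sA} h‖² ds/s ≤ C_N ‖h‖², a consequence of the quadratic estimate (Q)_A.) -/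
/-!
Differentiating the semigroup law `T (s + t) = T s * T t` first in `t` and then in `s` gives
`T⁽ᵏ⁺¹⁾(s + t) = T'(s) T⁽ᵏ⁾(t)`, hence `T⁽ᴺ⁾(N u) = T'(u)ᴺ`. Keeping one factor `T'(u)` on the
vector and bounding the other `N - 1` in norm by `M₁ / u`, the integrand at `s = N u` is at most
a constant times `u ‖T'(u) h‖²`, and the substitution `s = N u` reduces everything to `(Q)_A`.
-/

open MeasureTheory Filter Topology Set

lemma lintegral_Ioi_eq_mul_lintegral_comp_mul (g : ℝ → ENNReal) {c : ℝ} (hc : 0 < c) :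
    ∫⁻ s in Ioi 0, g s = ENNReal.ofReal c * ∫⁻ u in Ioi 0, g (c * u) := by
  have hderiv (u : ℝ) : HasDerivAt (c * ·) c u := by
    simpa using (hasDerivAt_id u).const_mul c
  have himage : (c * ·) '' Ioi (0 : ℝ) = Ioi 0 := by
    rw [image_mul_left_Ioi hc, mul_zero]
  conv_lhs => rw [← himage]
  rw [lintegral_image_eq_lintegral_abs_deriv_mul measurableSet_Ioi
      (fun u _ => (hderiv u).hasDerivWithinAt) (mul_right_injective₀ hc.ne').injOn,
    abs_of_pos hc, lintegral_const_mul' _ _ ENNReal.ofReal_ne_top]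

lemma lintegral_Ioi_ofReal_le_of_comp_mul_le {f g : ℝ → ℝ} {c K : ℝ}
    (hc : 0 < c) (hK : 0 ≤ K)
    (hfg : ∀ u, 0 < u → f (c * u) ≤ K * g u) :
    ∫⁻ s in Ioi 0, ENNReal.ofReal (f s)
      ≤ ENNReal.ofReal (c * K) * ∫⁻ u in Ioi 0, ENNReal.ofReal (g u) := by
  rw [lintegral_Ioi_eq_mul_lintegral_comp_mul _ hc, ENNReal.ofReal_mul hc.le, mul_assoc,
    ← lintegral_const_mul' (ENNReal.ofReal K) _ ENNReal.ofReal_ne_top]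
  refine mul_le_mul_right (setLIntegral_mono' measurableSet_Ioi fun u hu => ?_) _
  rw [← ENNReal.ofReal_mul hK]
  exact ENNReal.ofReal_le_ofReal (hfg u hu)

section SemigroupDerivatives

variable {A : Type*} [NormedRing A] [NormedAlgebra ℝ A] {T : ℝ → A} {Tk : ℕ → ℝ → A}

lemma iterDeriv_add_eq_mul (hTadd : ∀ s t : ℝ, 0 < s → 0 < t → T (s + t) = T s * T t)
    (hTk0 : ∀ t : ℝ, 0 < t → Tk 0 t = T t)
    (hTkderiv : ∀ (k : ℕ) (t : ℝ), 0 < t → HasDerivAt (Tk k) (Tk (k + 1) t) t)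
    (k : ℕ) {s t : ℝ} (hs : 0 < s) (ht : 0 < t) : Tk k (s + t) = T s * Tk k t := by
  induction k generalizing t with
  | zero => rw [hTk0 _ (add_pos hs ht), hTk0 t ht, hTadd s t hs ht]
  | succ k ih =>
    have hshift : HasDerivAt (fun u => Tk k (s + u)) (Tk (k + 1) (s + t)) t :=
      (hTkderiv k (s + t) (add_pos hs ht)).comp_const_add s t
    have hnear : (fun u => Tk k (s + u)) =ᶠ[𝓝 t] fun u => T s * Tk k u :=
      eventually_of_mem (Ioi_mem_nhds ht) fun u hu => ih hu
    exact (hnear.hasDerivAt_iff.1 hshift).unique ((hTkderiv k t ht).const_mul (T s))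

lemma iterDeriv_succ_add_eq_mul (hTadd : ∀ s t : ℝ, 0 < s → 0 < t → T (s + t) = T s * T t)
    (hTk0 : ∀ t : ℝ, 0 < t → Tk 0 t = T t)
    (hTkderiv : ∀ (k : ℕ) (t : ℝ), 0 < t → HasDerivAt (Tk k) (Tk (k + 1) t) t)
    (k : ℕ) {s t : ℝ} (hs : 0 < s) (ht : 0 < t) : Tk (k + 1) (s + t) = Tk 1 s * Tk k t := by
  have hT : HasDerivAt T (Tk 1 s) s :=
    (EventuallyEq.hasDerivAt_iff (eventually_of_mem (Ioi_mem_nhds hs) hTk0)).1 (hTkderiv 0 s hs)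
  have hshift : HasDerivAt (fun u => Tk k (u + t)) (Tk (k + 1) (s + t)) s :=
    (hTkderiv k (s + t) (add_pos hs ht)).comp_add_const s t
  have hnear : (fun u => Tk k (u + t)) =ᶠ[𝓝 s] fun u => T u * Tk k t :=
    eventually_of_mem (Ioi_mem_nhds hs) fun u hu => iterDeriv_add_eq_mul hTadd hTk0 hTkderiv k hu ht
  exact (hnear.hasDerivAt_iff.1 hshift).unique (hT.mul_const (Tk k t))

lemma iterDeriv_succ_nat_succ_mul (hTadd : ∀ s t : ℝ, 0 < s → 0 < t → T (s + t) = T s * T t)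
    (hTk0 : ∀ t : ℝ, 0 < t → Tk 0 t = T t)
    (hTkderiv : ∀ (k : ℕ) (t : ℝ), 0 < t → HasDerivAt (Tk k) (Tk (k + 1) t) t)
    (m : ℕ) {u : ℝ} (hu : 0 < u) : Tk (m + 1) ((m + 1) * u) = Tk 1 u ^ (m + 1) := by
  induction m with
  | zero => simp
  | succ m ih =>
    have hsplit : ((m + 1 : ℕ) + 1 : ℝ) * u = u + (m + 1) * u := by push_cast; ring
    rw [hsplit, iterDeriv_succ_add_eq_mul hTadd hTk0 hTkderiv _ hu (by positivity), ih]
    exact (pow_succ' _ _).symm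

end SemigroupDerivatives

section OperatorPowers

variable {𝕜 E : Type*} [NontriviallyNormedField 𝕜] [NormedAddCommGroup E] [NormedSpace 𝕜 E]

lemma ContinuousLinearMap.norm_pow_apply_le (B : E →L[𝕜] E) (n : ℕ) (x : E) :
    ‖(B ^ n) x‖ ≤ ‖B‖ ^ n * ‖x‖ := by
  induction n with
  | zero => simp
  | succ n ih =>
    calc ‖(B ^ (n + 1)) x‖ = ‖B ((B ^ n) x)‖ := by rw [pow_succ', mul_apply_eq_comp]
      _ ≤ ‖B‖ * (‖B‖ ^ n * ‖x‖) := B.le_of_opNorm_le_of_le le_rfl ih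
      _ = ‖B‖ ^ (n + 1) * ‖x‖ := by ring

lemma ContinuousLinearMap.pow_mul_sq_norm_pow_succ_apply_le (B : E →L[𝕜] E) {u M : ℝ}
    (hu : 0 ≤ u) (hB : u * ‖B‖ ≤ M) (m : ℕ) (x : E) :
    u ^ (2 * m + 1) * ‖(B ^ (m + 1)) x‖ ^ 2 ≤ M ^ (2 * m) * (u * ‖B x‖ ^ 2) := by
  have hpow : ‖(B ^ (m + 1)) x‖ ≤ ‖B‖ ^ m * ‖B x‖ := by
    rw [pow_succ, mul_apply_eq_comp]
    exact B.norm_pow_apply_le m (B x)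
  calc u ^ (2 * m + 1) * ‖(B ^ (m + 1)) x‖ ^ 2
        ≤ u ^ (2 * m + 1) * (‖B‖ ^ m * ‖B x‖) ^ 2 := by gcongr
    _ = (u * ‖B‖) ^ (2 * m) * (u * ‖B x‖ ^ 2) := by ring
    _ ≤ M ^ (2 * m) * (u * ‖B x‖ ^ 2) := by gcongr

end OperatorPowers

theorem higher_order_square_function_estimate_general
    {H : Type*} [NormedAddCommGroup H] [InnerProductSpace ℂ H]
    (T : ℝ → H →L[ℂ] H) (Tk : ℕ → ℝ → H →L[ℂ] H)
    (hTadd : ∀ s t : ℝ, 0 ≤ s → 0 ≤ t → T (s + t) = (T s).comp (T t))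
    (hTk0 : ∀ t : ℝ, 0 < t → Tk 0 t = T t)
    (hTkderiv : ∀ (k : ℕ) (t : ℝ), 0 < t → HasDerivAt (Tk k) (Tk (k + 1) t) t)
    (M₁ : ℝ) (hM1 : ∀ t : ℝ, 0 < t → t * ‖Tk 1 t‖ ≤ M₁)
    (C : ℝ) (hC : 0 < C)
    -- the quadratic estimate (Q)_A
    (hQ : ∀ h : H, ∫⁻ s in Ioi (0 : ℝ), ENNReal.ofReal (s * ‖(Tk 1 s) h‖ ^ 2)
      ≤ ENNReal.ofReal (C * ‖h‖ ^ 2))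
    (N : ℕ) (hN : 1 ≤ N) :
    ∃ C_N : ℝ, 0 < C_N ∧ ∀ h : H,
      ∫⁻ s in Ioi (0 : ℝ), ENNReal.ofReal (s ^ (2 * N - 1) * ‖(Tk N s) h‖ ^ 2)
        ≤ ENNReal.ofReal (C_N * ‖h‖ ^ 2) := by
  obtain ⟨m, rfl⟩ : ∃ m, N = m + 1 := ⟨N - 1, by omega⟩
  set c : ℝ := m + 1
  set M : ℝ := max M₁ 1
  have hTadd' : ∀ s t : ℝ, 0 < s → 0 < t → T (s + t) = T s * T t :=
    fun s t hs ht => hTadd s t hs.le ht.le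
  refine ⟨c * (c ^ (2 * m + 1) * M ^ (2 * m)) * C, by positivity, fun h => ?_⟩
  have hpointwise (u : ℝ) (hu : 0 < u) :
      (c * u) ^ (2 * (m + 1) - 1) * ‖Tk (m + 1) (c * u) h‖ ^ 2
        ≤ c ^ (2 * m + 1) * M ^ (2 * m) * (u * ‖Tk 1 u h‖ ^ 2) := by
    rw [show 2 * (m + 1) - 1 = 2 * m + 1 by omega, mul_pow, mul_assoc (c ^ _), mul_assoc (c ^ _),
      iterDeriv_succ_nat_succ_mul hTadd' hTk0 hTkderiv m hu]
    exact mul_le_mul_of_nonneg_left ((Tk 1 u).pow_mul_sq_norm_pow_succ_apply_le hu.le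
      ((hM1 u hu).trans (le_max_left _ _)) m h) (by positivity)
  calc _ ≤ ENNReal.ofReal (c * (c ^ (2 * m + 1) * M ^ (2 * m)))
          * ∫⁻ u in Ioi 0, ENNReal.ofReal (u * ‖Tk 1 u h‖ ^ 2) :=
        lintegral_Ioi_ofReal_le_of_comp_mul_le (by positivity) (by positivity) hpointwise
    _ ≤ ENNReal.ofReal (c * (c ^ (2 * m + 1) * M ^ (2 * m)))
          * ENNReal.ofReal (C * ‖h‖ ^ 2) := by
        gcongr
        exact hQ h
    _ = _ := by rw [← ENNReal.ofReal_mul (by positivity), mul_assoc _ C]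

/-- Higher-order square function estimate (3.1): under the quadratic estimate `(Q)_A`
(with constant `C`) and the analyticity bound `M₁`, for every `N ∈ ℕ₊` there is a
constant `C_N > 0` such that for all `h ∈ H`,
`∫₀^∞ s^(2N-1) ‖T⁽ᴺ⁾(s) h‖² ds ≤ C_N ‖h‖²`. -/
theorem higher_order_square_function_estimate
    {H : Type*} [NormedAddCommGroup H] [InnerProductSpace ℂ H] [CompleteSpace H]
    (T : ℝ → H →L[ℂ] H) (Tk : ℕ → ℝ → H →L[ℂ] H)
    (hT0 : T 0 = ContinuousLinearMap.id ℂ H)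
    (hTadd : ∀ s t : ℝ, 0 ≤ s → 0 ≤ t → T (s + t) = (T s).comp (T t))
    (hTcont : ∀ x : H, ContinuousOn (fun t : ℝ => T t x) (Ici (0 : ℝ)))
    (hTk0 : ∀ t : ℝ, 0 < t → Tk 0 t = T t)
    (hTkderiv : ∀ (k : ℕ) (t : ℝ), 0 < t → HasDerivAt (Tk k) (Tk (k + 1) t) t)
    (M₁ : ℝ) (hM1 : ∀ t : ℝ, 0 < t → t * ‖Tk 1 t‖ ≤ M₁)
    (C : ℝ) (hC : 0 < C)
    -- the quadratic estimate (Q)_A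
    (hQ : ∀ h : H, ∫⁻ s in Ioi (0 : ℝ), ENNReal.ofReal (s * ‖(Tk 1 s) h‖ ^ 2)
      ≤ ENNReal.ofReal (C * ‖h‖ ^ 2))
    (N : ℕ) (hN : 1 ≤ N) :
    ∃ C_N : ℝ, 0 < C_N ∧ ∀ h : H,
      ∫⁻ s in Ioi (0 : ℝ), ENNReal.ofReal (s ^ (2 * N - 1) * ‖(Tk N s) h‖ ^ 2)
        ≤ ENNReal.ofReal (C_N * ‖h‖ ^ 2) :=
  higher_order_square_function_estimate_general T Tk hTadd hTk0 hTkderiv M₁ hM1 C hC hQ N hN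
end

section
/- Square function estimate (3.2): For every N ∈ ℕ₊ there exists a constant C′_N > 0, depending only on N and C (one may take C′_N = (log(N+1))² C), such that for all h ∈ H: ∫₀^∞ ‖T(s)h - T((N+1)s)h‖² ds/s ≤ C′_N ‖h‖². (In semigroup notation this is ∫₀^∞ ‖e^{-sA}(I - e^{-NsA}) h‖² ds/s ≤ C′_N ‖h‖², a consequence of the quadratic estimate (Q)_A.) -/
open MeasureTheory Filter Topology Set
open scoped ENNReal

/-!
Put `g(t) = T(t)h` and `λ = N + 1`. Since `g(s) - g(λs) = -∫_s^{λs} g'`,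
Cauchy–Schwarz against the weight `du/u`, whose mass on `[s, λs]` is `log λ`, gives
`‖g(s) - g(λs)‖² ≤ log λ · ∫_s^{λs} u ‖g'(u)‖² du`.
Dividing by `s` and integrating over `s > 0`, Tonelli turns the double integral into
`log λ · ∫₀^∞ u ‖g'(u)‖² du`, because `u ∈ [s, λs]` exactly when `s ∈ [u/λ, u]`,
again a set of `ds/s`-mass `log λ`. With `g' = T⁽¹⁾ h`, the quadratic estimate bounds
the result by `log(N+1)² C ‖h‖²`.
-/

theorem sq_lintegral_mul_le_lintegral_sq_mul_lintegral_sq {α : Type*} [MeasurableSpace α]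
    {μ : Measure α} {f g : α → ℝ≥0∞} (hf : AEMeasurable f μ) (hg : AEMeasurable g μ) :
    (∫⁻ x, f x * g x ∂μ) ^ 2 ≤ (∫⁻ x, f x ^ 2 ∂μ) * ∫⁻ x, g x ^ 2 ∂μ := by
  have holder := ENNReal.lintegral_mul_le_Lp_mul_Lq μ Real.HolderConjugate.two_two hf hg
  simp only [Pi.mul_apply, ENNReal.rpow_two] at holder
  calc (∫⁻ x, f x * g x ∂μ) ^ 2
      ≤ ((∫⁻ x, f x ^ 2 ∂μ) ^ (1 / 2 : ℝ) * (∫⁻ x, g x ^ 2 ∂μ) ^ (1 / 2 : ℝ)) ^ 2 :=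
        pow_le_pow_left' holder 2
    _ = (∫⁻ x, f x ^ 2 ∂μ) * ∫⁻ x, g x ^ 2 ∂μ := by
        rw [mul_pow, ← ENNReal.rpow_two, ← ENNReal.rpow_two, ← ENNReal.rpow_mul,
          ← ENNReal.rpow_mul]
        norm_num

theorem lintegral_Icc_ofReal_inv {a b : ℝ} (ha : 0 < a) (hab : a ≤ b) :
    ∫⁻ u in Icc a b, ENNReal.ofReal u⁻¹ = ENNReal.ofReal (Real.log (b / a)) := by
  have hpos : ∀ u ∈ Icc a b, 0 < u := fun u hu => ha.trans_le hu.1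
  have hint : IntegrableOn (fun u : ℝ => u⁻¹) (Icc a b) :=
    (continuousOn_inv₀.mono fun u hu => (hpos u hu).ne').integrableOn_Icc
  rw [← ofReal_integral_eq_lintegral_ofReal hint
      ((ae_restrict_iff' measurableSet_Icc).2
        (ae_of_all _ fun u hu => inv_nonneg.2 (hpos u hu).le)),
    integral_Icc_eq_integral_Ioc, ← intervalIntegral.integral_of_le hab,
    integral_inv_of_pos ha (ha.trans_le hab)]

theorem sq_lintegral_le_log_mul_lintegral {a b : ℝ} (ha : 0 < a) (hab : a ≤ b) {F : ℝ → ℝ≥0∞}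
    (hF : AEMeasurable F (volume.restrict (Icc a b))) :
    (∫⁻ u in Icc a b, F u) ^ 2
      ≤ ENNReal.ofReal (Real.log (b / a)) * ∫⁻ u in Icc a b, ENNReal.ofReal u * F u ^ 2 := by
  have hsplit : ∀ᵐ u ∂volume.restrict (Icc a b),
      F u = ENNReal.ofReal (√u)⁻¹ * (ENNReal.ofReal √u * F u) := by
    filter_upwards [ae_restrict_mem measurableSet_Icc] with u hu
    have hu : 0 < √u := Real.sqrt_pos.2 (ha.trans_le hu.1)
    rw [← mul_assoc, ← ENNReal.ofReal_mul (inv_nonneg.2 hu.le), inv_mul_cancel₀ hu.ne',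
      ENNReal.ofReal_one, one_mul]
  have hsq_inv : ∀ᵐ u ∂volume.restrict (Icc a b),
      ENNReal.ofReal (√u)⁻¹ ^ 2 = ENNReal.ofReal u⁻¹ := by
    filter_upwards [ae_restrict_mem measurableSet_Icc] with u hu
    rw [← ENNReal.ofReal_pow (inv_nonneg.2 (Real.sqrt_nonneg u)), inv_pow,
      Real.sq_sqrt (ha.le.trans hu.1)]
  have hsq : ∀ᵐ u ∂volume.restrict (Icc a b),
      (ENNReal.ofReal √u * F u) ^ 2 = ENNReal.ofReal u * F u ^ 2 := by
    filter_upwards [ae_restrict_mem measurableSet_Icc] with u hu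
    rw [mul_pow, ← ENNReal.ofReal_pow (Real.sqrt_nonneg u), Real.sq_sqrt (ha.le.trans hu.1)]
  calc (∫⁻ u in Icc a b, F u) ^ 2
      = (∫⁻ u in Icc a b, ENNReal.ofReal (√u)⁻¹ * (ENNReal.ofReal √u * F u)) ^ 2 := by
        rw [lintegral_congr_ae hsplit]
    _ ≤ (∫⁻ u in Icc a b, ENNReal.ofReal (√u)⁻¹ ^ 2) *
          ∫⁻ u in Icc a b, (ENNReal.ofReal √u * F u) ^ 2 :=
        sq_lintegral_mul_le_lintegral_sq_mul_lintegral_sq (by fun_prop)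
          ((by fun_prop : Measurable fun u : ℝ => ENNReal.ofReal √u).aemeasurable.mul hF)
    _ = ENNReal.ofReal (Real.log (b / a)) * ∫⁻ u in Icc a b, ENNReal.ofReal u * F u ^ 2 := by
        rw [lintegral_congr_ae hsq_inv, lintegral_congr_ae hsq, lintegral_Icc_ofReal_inv ha hab]

theorem sq_enorm_sub_le_log_mul_lintegral {E : Type*} [NormedAddCommGroup E] [NormedSpace ℝ E]
    {f : ℝ → E} (hf : ContDiffOn ℝ 1 f (Ioi 0)) {a b : ℝ} (ha : 0 < a) (hab : a ≤ b) :
    ‖f b - f a‖ₑ ^ 2 ≤ ENNReal.ofReal (Real.log (b / a)) *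
      ∫⁻ u in Icc a b, ENNReal.ofReal u * ‖deriv f u‖ₑ ^ 2 := by
  have hsub : Icc a b ⊆ Ioi 0 := fun u hu => ha.trans_le hu.1
  have hmeas : AEMeasurable (fun u => ‖deriv f u‖ₑ) (volume.restrict (Icc a b)) :=
    ((hf.continuousOn_deriv_of_isOpen isOpen_Ioi le_rfl).mono hsub).enorm.aemeasurable
      measurableSet_Icc
  calc ‖f b - f a‖ₑ ^ 2 ≤ (∫⁻ u in Icc a b, ‖deriv f u‖ₑ) ^ 2 :=
        pow_le_pow_left' (enorm_sub_le_lintegral_deriv_of_contDiffOn_Icc (hf.mono hsub) hab) 2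
    _ ≤ _ := sq_lintegral_le_log_mul_lintegral ha hab hmeas

theorem mem_Icc_mul_iff_mem_Icc_div {c s u : ℝ} (hc : 0 < c) :
    u ∈ Icc s (c * s) ↔ s ∈ Icc (u / c) u := by
  rw [mem_Icc, mem_Icc, div_le_iff₀ hc, mul_comm]
  exact and_comm

theorem lintegral_Ioi_inv_mul_lintegral_Icc {W : ℝ → ℝ≥0∞}
    (hW : AEMeasurable W (volume.restrict (Ioi 0))) {c : ℝ} (hc : 1 ≤ c) :
    ∫⁻ s in Ioi 0, ENNReal.ofReal s⁻¹ * ∫⁻ u in Icc s (c * s), W u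
      = ENNReal.ofReal (Real.log c) * ∫⁻ u in Ioi 0, W u := by
  have hc0 : 0 < c := zero_lt_one.trans_le hc
  let K : ℝ × ℝ → ℝ≥0∞ := fun p => ENNReal.ofReal p.1⁻¹ * (Icc p.1 (c * p.1)).indicator W p.2
  have hK : AEMeasurable K ((volume.restrict (Ioi 0)).prod (volume.restrict (Ioi 0))) := by
    have hE : MeasurableSet {p : ℝ × ℝ | p.1 ≤ p.2 ∧ p.2 ≤ c * p.1} :=
      (measurableSet_le measurable_fst measurable_snd).inter
        (measurableSet_le measurable_snd (measurable_fst.const_mul c))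
    exact (by fun_prop : Measurable fun p : ℝ × ℝ => ENNReal.ofReal p.1⁻¹).aemeasurable.mul
      ((hW.comp_snd).indicator hE)
  have hinner_u : ∀ s ∈ Ioi (0 : ℝ),
      ∫⁻ u in Ioi 0, K (s, u) = ENNReal.ofReal s⁻¹ * ∫⁻ u in Icc s (c * s), W u := by
    intro s hs
    have hsub : Icc s (c * s) ⊆ Ioi 0 := fun u hu => lt_of_lt_of_le hs hu.1
    simp only [K]
    rw [lintegral_const_mul' _ _ ENNReal.ofReal_ne_top, lintegral_indicator measurableSet_Icc,
      Measure.restrict_restrict measurableSet_Icc, inter_eq_self_of_subset_left hsub]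
  have hinner_s : ∀ u ∈ Ioi (0 : ℝ),
      ∫⁻ s in Ioi 0, K (s, u) = ENNReal.ofReal (Real.log c) * W u := by
    intro u hu
    have hsub : Icc (u / c) u ⊆ Ioi 0 := fun s hs => lt_of_lt_of_le (div_pos hu hc0) hs.1
    have hK_eq : ∀ s,
        K (s, u) = (Icc (u / c) u).indicator (fun s => ENNReal.ofReal s⁻¹ * W u) s := by
      intro s
      simp only [K, indicator_apply, mem_Icc_mul_iff_mem_Icc_div hc0, mul_ite, mul_zero]
    simp_rw [hK_eq]
    rw [lintegral_indicator measurableSet_Icc, Measure.restrict_restrict measurableSet_Icc,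
      inter_eq_self_of_subset_left hsub, lintegral_mul_const _ (by fun_prop),
      lintegral_Icc_ofReal_inv (div_pos hu hc0) (div_le_self hu.le hc), div_div_cancel₀ hu.ne']
  calc ∫⁻ s in Ioi 0, ENNReal.ofReal s⁻¹ * ∫⁻ u in Icc s (c * s), W u
      = ∫⁻ s in Ioi 0, ∫⁻ u in Ioi 0, K (s, u) :=
        (setLIntegral_congr_fun measurableSet_Ioi hinner_u).symm
    _ = ∫⁻ u in Ioi 0, ∫⁻ s in Ioi 0, K (s, u) := lintegral_lintegral_swap hK
    _ = ∫⁻ u in Ioi 0, ENNReal.ofReal (Real.log c) * W u :=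
        setLIntegral_congr_fun measurableSet_Ioi hinner_s
    _ = ENNReal.ofReal (Real.log c) * ∫⁻ u in Ioi 0, W u :=
        lintegral_const_mul' _ _ ENNReal.ofReal_ne_top

theorem lintegral_sq_enorm_sub_mul_inv_le {E : Type*} [NormedAddCommGroup E] [NormedSpace ℝ E]
    {f : ℝ → E} (hf : ContDiffOn ℝ 1 f (Ioi 0)) {c : ℝ} (hc : 1 ≤ c) :
    ∫⁻ s in Ioi 0, ‖f s - f (c * s)‖ₑ ^ 2 * ENNReal.ofReal s⁻¹
      ≤ ENNReal.ofReal (Real.log c) ^ 2 * ∫⁻ u in Ioi 0, ENNReal.ofReal u * ‖deriv f u‖ₑ ^ 2 := by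
  have hW : AEMeasurable (fun u => ENNReal.ofReal u * ‖deriv f u‖ₑ ^ 2)
      (volume.restrict (Ioi 0)) :=
    ENNReal.measurable_ofReal.aemeasurable.mul
      (((hf.continuousOn_deriv_of_isOpen isOpen_Ioi le_rfl).enorm.aemeasurable
        measurableSet_Ioi).pow_const 2)
  calc ∫⁻ s in Ioi 0, ‖f s - f (c * s)‖ₑ ^ 2 * ENNReal.ofReal s⁻¹
      ≤ ∫⁻ s in Ioi 0, ENNReal.ofReal (Real.log c) * (ENNReal.ofReal s⁻¹ *
          ∫⁻ u in Icc s (c * s), ENNReal.ofReal u * ‖deriv f u‖ₑ ^ 2) := by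
        refine setLIntegral_mono' measurableSet_Ioi fun s (hs : 0 < s) => ?_
        have hpt := sq_enorm_sub_le_log_mul_lintegral hf hs (le_mul_of_one_le_left hs.le hc)
        rw [mul_div_cancel_right₀ c hs.ne', enorm_sub_rev] at hpt
        calc ‖f s - f (c * s)‖ₑ ^ 2 * ENNReal.ofReal s⁻¹
            ≤ ENNReal.ofReal (Real.log c) *
                (∫⁻ u in Icc s (c * s), ENNReal.ofReal u * ‖deriv f u‖ₑ ^ 2) *
                ENNReal.ofReal s⁻¹ := by gcongr
          _ = _ := by ring
    _ = ENNReal.ofReal (Real.log c) ^ 2 *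
          ∫⁻ u in Ioi 0, ENNReal.ofReal u * ‖deriv f u‖ₑ ^ 2 := by
        rw [lintegral_const_mul' _ _ ENNReal.ofReal_ne_top,
          lintegral_Ioi_inv_mul_lintegral_Icc hW hc, ← mul_assoc, sq]

theorem square_function_estimate_difference_general
    {H : Type*} [NormedAddCommGroup H] [InnerProductSpace ℂ H]
    (T : ℝ → H →L[ℂ] H) (Tk : ℕ → ℝ → H →L[ℂ] H)
    (hTk0 : ∀ t : ℝ, 0 < t → Tk 0 t = T t)
    (hTkderiv : ∀ (k : ℕ) (t : ℝ), 0 < t → HasDerivAt (Tk k) (Tk (k + 1) t) t)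
    (C : ℝ) (hC : 0 < C)
    -- the quadratic estimate (Q)_A
    (hQ : ∀ h : H, ∫⁻ s in Ioi (0 : ℝ), ENNReal.ofReal (s * ‖(Tk 1 s) h‖ ^ 2)
      ≤ ENNReal.ofReal (C * ‖h‖ ^ 2))
    (N : ℕ) (hN : 1 ≤ N) :
    ∃ C' : ℝ, 0 < C' ∧ ∀ h : H,
      ∫⁻ s in Ioi (0 : ℝ), ENNReal.ofReal (‖T s h - T ((N + 1 : ℝ) * s) h‖ ^ 2 / s)
        ≤ ENNReal.ofReal (C' * ‖h‖ ^ 2) := by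
  have hL : 0 < Real.log (N + 1) := Real.log_pos (by norm_cast; omega)
  refine ⟨Real.log (N + 1) ^ 2 * C, by positivity, fun h => ?_⟩
  have hderiv : ∀ k, ∀ t ∈ Ioi (0 : ℝ), HasDerivAt (fun s => Tk k s h) (Tk (k + 1) t h) t :=
    fun k t ht =>
      ((ContinuousLinearMap.apply ℂ H h).restrictScalars ℝ).hasFDerivAt.comp_hasDerivAt t
        (hTkderiv k t ht)
  have hf : ContDiffOn ℝ 1 (fun s => Tk 0 s h) (Ioi 0) := by
    refine (contDiffOn_succ_iff_deriv_of_isOpen (n := 0) isOpen_Ioi).2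
      ⟨fun t ht => (hderiv 0 t ht).differentiableAt.differentiableWithinAt, by simp, ?_⟩
    exact contDiffOn_zero.2 (ContinuousOn.congr
      (fun t ht => (hderiv 1 t ht).continuousAt.continuousWithinAt)
      fun t ht => (hderiv 0 t ht).deriv)
  calc ∫⁻ s in Ioi 0, ENNReal.ofReal (‖T s h - T ((N + 1 : ℝ) * s) h‖ ^ 2 / s)
      = ∫⁻ s in Ioi 0, ‖Tk 0 s h - Tk 0 ((N + 1 : ℝ) * s) h‖ₑ ^ 2 * ENNReal.ofReal s⁻¹ := by
        refine setLIntegral_congr_fun measurableSet_Ioi fun s hs => ?_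
        rw [hTk0 s hs, hTk0 _ (mul_pos (by positivity) hs), div_eq_mul_inv,
          ENNReal.ofReal_mul (by positivity), ENNReal.ofReal_pow (norm_nonneg _), ofReal_norm]
    _ ≤ ENNReal.ofReal (Real.log (N + 1)) ^ 2 *
          ∫⁻ u in Ioi 0, ENNReal.ofReal u * ‖deriv (fun s => Tk 0 s h) u‖ₑ ^ 2 :=
        lintegral_sq_enorm_sub_mul_inv_le hf (by linarith)
    _ = ENNReal.ofReal (Real.log (N + 1)) ^ 2 *
          ∫⁻ u in Ioi 0, ENNReal.ofReal (u * ‖Tk 1 u h‖ ^ 2) := by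
        congr 1
        refine setLIntegral_congr_fun measurableSet_Ioi fun u hu => ?_
        rw [(hderiv 0 u hu).deriv, ENNReal.ofReal_mul' (by positivity),
          ENNReal.ofReal_pow (norm_nonneg _), ofReal_norm]
    _ ≤ ENNReal.ofReal (Real.log (N + 1)) ^ 2 * ENNReal.ofReal (C * ‖h‖ ^ 2) := by
        gcongr; exact hQ h
    _ = ENNReal.ofReal (Real.log (N + 1) ^ 2 * C * ‖h‖ ^ 2) := by
        rw [← ENNReal.ofReal_pow hL.le, ← ENNReal.ofReal_mul (by positivity), mul_assoc]

/-- Square function estimate (3.2): under the quadratic estimate `(Q)_A`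
(with constant `C`), for every `N ∈ ℕ₊` there is a constant `C'_N > 0` such that
for all `h ∈ H`, `∫₀^∞ ‖T(s)h - T((N+1)s)h‖² ds/s ≤ C'_N ‖h‖²`. -/
theorem square_function_estimate_difference
    {H : Type*} [NormedAddCommGroup H] [InnerProductSpace ℂ H] [CompleteSpace H]
    (T : ℝ → H →L[ℂ] H) (Tk : ℕ → ℝ → H →L[ℂ] H)
    (hT0 : T 0 = ContinuousLinearMap.id ℂ H)
    (hTadd : ∀ s t : ℝ, 0 ≤ s → 0 ≤ t → T (s + t) = (T s).comp (T t))
    (hTcont : ∀ x : H, ContinuousOn (fun t : ℝ => T t x) (Ici (0 : ℝ)))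
    (hTk0 : ∀ t : ℝ, 0 < t → Tk 0 t = T t)
    (hTkderiv : ∀ (k : ℕ) (t : ℝ), 0 < t → HasDerivAt (Tk k) (Tk (k + 1) t) t)
    (C : ℝ) (hC : 0 < C)
    -- the quadratic estimate (Q)_A
    (hQ : ∀ h : H, ∫⁻ s in Ioi (0 : ℝ), ENNReal.ofReal (s * ‖(Tk 1 s) h‖ ^ 2)
      ≤ ENNReal.ofReal (C * ‖h‖ ^ 2))
    (N : ℕ) (hN : 1 ≤ N) :
    ∃ C' : ℝ, 0 < C' ∧ ∀ h : H,
      ∫⁻ s in Ioi (0 : ℝ), ENNReal.ofReal (‖T s h - T ((N + 1 : ℝ) * s) h‖ ^ 2 / s)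
        ≤ ENNReal.ofReal (C' * ‖h‖ ^ 2) :=
  square_function_estimate_difference_general T Tk hTk0 hTkderiv C hC hQ N hN
end

section
/- Reduction of weak convergence from N = 1 to general N (Section 3): Let N ∈ ℕ₊ and let f : (0,∞) → H be strongly measurable with ∫₀^∞ s ‖f(s)‖² ds < ∞. Then for every h ∈ H the function s ↦ ⟨f(s), T(s)* h - T(Ns)* h⟩ is integrable on (0,∞), with ∫₀^∞ |⟨f(s), T(s)* h - T(Ns)* h⟩| ds ≤ √C · ( ∫₀^∞ s ‖f(s)‖² ds )^{1/2} · ‖h‖. Consequently, if for every h ∈ H the function s ↦ ⟨T(s) f(s), h⟩ is integrable on (0,∞), then for every h ∈ H the function s ↦ ⟨T(Ns) f(s), h⟩ is integrable on (0,∞) and ∫₀^∞ ⟨T(Ns) f(s), h⟩ ds = ∫₀^∞ ⟨T(s) f(s), h⟩ ds - ∫₀^∞ ⟨f(s), T(s)* h - T(Ns)* h⟩ ds. -/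
/-!
Pairing with `h` gives `⟨T(Ns) f(s), h⟩ = ⟨T(s) f(s), h⟩ - ⟨f(s), T(s)* h - T(Ns)* h⟩`, so
everything comes down to the integrability of the last term. Splitting `‖f(s)‖ ‖g(s)‖` as
`(√s ‖f(s)‖) (‖g(s)‖ / √s)`, this is the Cauchy–Schwarz inequality on `(0, ∞)` for the weights
`s` and `1 / s`; the second factor is controlled by the adjoint square function estimate.
-/

open MeasureTheory Filter Topology Set ContinuousLinearMap

theorem MeasureTheory.AEStronglyMeasurable.clm_apply_of_forall
    {α 𝕜 E F : Type*} [MeasurableSpace α] {μ : Measure α} [NontriviallyNormedField 𝕜]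
    [NormedAddCommGroup E] [NormedSpace 𝕜 E] [NormedAddCommGroup F] [NormedSpace 𝕜 F]
    {G : α → E →L[𝕜] F} {f : α → E}
    (hG : ∀ x, AEStronglyMeasurable (fun a => G a x) μ) (hf : AEStronglyMeasurable f μ) :
    AEStronglyMeasurable (fun a => G a (f a)) μ := by
  have simple : ∀ ψ : SimpleFunc α E, AEStronglyMeasurable (fun a => G a (ψ a)) μ := by
    intro ψ
    induction ψ using SimpleFunc.induction with
    | @const c A hA =>
      have : (fun a => G a (SimpleFunc.piecewise A hA (SimpleFunc.const α c)
          (SimpleFunc.const α 0) a)) = A.indicator (fun a => G a c) := by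
        ext a
        by_cases ha : a ∈ A <;> simp [ha]
      exact this ▸ (hG c).indicator hA
    | @add ψ φ _ hψ hφ => exact (hψ.add hφ).congr (ae_of_all _ fun a => by simp)
  obtain ⟨f', hf', hff'⟩ := hf
  have hf'G : AEStronglyMeasurable (fun a => G a (f' a)) μ :=
    aestronglyMeasurable_of_tendsto_ae atTop (fun n => simple (hf'.approx n))
      (ae_of_all _ fun a => ((G a).continuous.tendsto _).comp (hf'.tendsto_approx a))
  exact hf'G.congr (hff'.mono fun a ha => by simp only [ha])

theorem MeasureTheory.integrable_and_integral_norm_le_of_norm_le_mul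
    {α E : Type*} [MeasurableSpace α] {μ : Measure α} [NormedAddCommGroup E]
    {φ : α → E} {a b : α → ℝ} (hφ : AEStronglyMeasurable φ μ) (ha : MemLp a 2 μ)
    (ha0 : 0 ≤ᵐ[μ] a) (hb : ∫⁻ x, ENNReal.ofReal (b x ^ 2) ∂μ ≠ ⊤)
    (hle : ∀ᵐ x ∂μ, ‖φ x‖ ≤ a x * b x) :
    Integrable φ μ ∧
      ∫ x, ‖φ x‖ ∂μ ≤ √(∫ x, a x ^ 2 ∂μ) * √(∫⁻ x, ENNReal.ofReal (b x ^ 2) ∂μ).toReal := by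
  -- `b` need not be measurable; `c` is a measurable substitute with `c ^ 2 ≤ b ^ 2`.
  set c : α → ℝ := fun x => ‖φ x‖ / a x
  have hc : AEStronglyMeasurable c μ :=
    (hφ.norm.aemeasurable.div ha.1.aemeasurable).aestronglyMeasurable
  have hc0 : 0 ≤ᵐ[μ] c := ha0.mono fun x hx => div_nonneg (norm_nonneg _) hx
  have hφc : ∀ᵐ x ∂μ, ‖φ x‖ = a x * c x := by
    filter_upwards [hle] with x hx
    rcases eq_or_ne (a x) 0 with h0 | h0
    · rw [h0, zero_mul] at hx ⊢
      exact le_antisymm hx (norm_nonneg _)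
    · exact (mul_div_cancel₀ _ h0).symm
  have hcb : ∀ᵐ x ∂μ, c x ^ 2 ≤ b x ^ 2 := by
    filter_upwards [hle, ha0] with x hx (hx0 : 0 ≤ a x)
    rcases hx0.eq_or_lt with h0 | h0
    · have hc0 : c x = 0 := by simp [c, ← h0]
      rw [hc0, zero_pow two_ne_zero]
      exact sq_nonneg _
    · exact pow_le_pow_left₀ (div_nonneg (norm_nonneg _) h0.le)
        (div_le_of_le_mul₀ h0.le (by nlinarith [norm_nonneg (φ x)]) (by rwa [mul_comm])) 2
  have hc_lint : ∫⁻ x, ENNReal.ofReal (c x ^ 2) ∂μ ≤ ∫⁻ x, ENNReal.ofReal (b x ^ 2) ∂μ :=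
    lintegral_mono_ae (hcb.mono fun x hx => ENNReal.ofReal_le_ofReal hx)
  have hc2 : MemLp c 2 μ := by
    refine (memLp_two_iff_integrable_sq hc).2 ⟨hc.pow 2, ?_⟩
    rw [hasFiniteIntegral_iff_ofReal (ae_of_all _ fun x => sq_nonneg _)]
    exact hc_lint.trans_lt hb.lt_top
  have hc_int : ∫ x, c x ^ 2 ∂μ ≤ (∫⁻ x, ENNReal.ofReal (b x ^ 2) ∂μ).toReal := by
    rw [integral_eq_lintegral_of_nonneg_ae (ae_of_all _ fun x => sq_nonneg _) (hc.pow 2)]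
    exact ENNReal.toReal_mono hb hc_lint
  have hac : ∫ x, ‖φ x‖ ∂μ = ∫ x, a x * c x ∂μ := integral_congr_ae hφc
  have holder := integral_mul_le_Lp_mul_Lq_of_nonneg Real.HolderConjugate.two_two ha0 hc0
    (by simpa using ha) (by simpa using hc2)
  simp only [Real.rpow_two, ← Real.sqrt_eq_rpow] at holder
  refine ⟨(ha.integrable_mul hc2).mono' hφ (hφc.mono fun x hx => hx.le), ?_⟩
  rw [hac]
  exact holder.trans (mul_le_mul_of_nonneg_left (Real.sqrt_le_sqrt hc_int) (Real.sqrt_nonneg _))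

theorem MeasureTheory.integrableOn_Ioi_and_integral_norm_le_of_norm_le_mul
    {E F G : Type*} [NormedAddCommGroup E] [NormedAddCommGroup F] [NormedAddCommGroup G]
    {φ : ℝ → E} {f : ℝ → F} {g : ℝ → G}
    (hφ : AEStronglyMeasurable φ (volume.restrict (Ioi 0)))
    (hf : AEStronglyMeasurable f (volume.restrict (Ioi 0)))
    (hfL2 : IntegrableOn (fun s => s * ‖f s‖ ^ 2) (Ioi 0))
    (hg : ∫⁻ s in Ioi 0, ENNReal.ofReal (‖g s‖ ^ 2 / s) ≠ ⊤)
    (hle : ∀ s, ‖φ s‖ ≤ ‖f s‖ * ‖g s‖) :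
    IntegrableOn φ (Ioi 0) ∧ ∫ s in Ioi 0, ‖φ s‖ ≤
      √(∫ s in Ioi 0, s * ‖f s‖ ^ 2) *
        √(∫⁻ s in Ioi 0, ENNReal.ofReal (‖g s‖ ^ 2 / s)).toReal := by
  have hsq_f : EqOn (fun s => (√s * ‖f s‖) ^ 2) (fun s => s * ‖f s‖ ^ 2) (Ioi 0) :=
    fun s (hs : 0 < s) => by simp only [mul_pow, Real.sq_sqrt hs.le]
  have hsq_g : EqOn (fun s => ENNReal.ofReal ((‖g s‖ / √s) ^ 2))
      (fun s => ENNReal.ofReal (‖g s‖ ^ 2 / s)) (Ioi 0) :=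
    fun s (hs : 0 < s) => by simp only [div_pow, Real.sq_sqrt hs.le]
  have ha_meas : AEStronglyMeasurable (fun s => √s * ‖f s‖) (volume.restrict (Ioi 0)) :=
    Real.continuous_sqrt.aestronglyMeasurable.mul hf.norm
  have ha : MemLp (fun s => √s * ‖f s‖) 2 (volume.restrict (Ioi 0)) :=
    (memLp_two_iff_integrable_sq ha_meas).2 (hfL2.congr_fun hsq_f.symm measurableSet_Ioi)
  have hle' : ∀ᵐ s ∂volume.restrict (Ioi 0), ‖φ s‖ ≤ √s * ‖f s‖ * (‖g s‖ / √s) := by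
    filter_upwards [ae_restrict_mem measurableSet_Ioi] with s (hs : 0 < s)
    have hs' : √s ≠ 0 := (Real.sqrt_pos.2 hs).ne'
    calc ‖φ s‖ ≤ ‖f s‖ * ‖g s‖ := hle s
      _ = √s * ‖f s‖ * (‖g s‖ / √s) := by field_simp
  rw [← setIntegral_congr_fun measurableSet_Ioi hsq_f,
    ← setLIntegral_congr_fun measurableSet_Ioi hsq_g]
  exact integrable_and_integral_norm_le_of_norm_le_mul hφ ha
    (ae_of_all _ fun s => by positivity)
    ((setLIntegral_congr_fun measurableSet_Ioi hsq_g).trans_ne hg) hle'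

theorem weak_convergence_reduction_general
    {H : Type*} [NormedAddCommGroup H] [InnerProductSpace ℂ H] [CompleteSpace H]
    (T : ℝ → H →L[ℂ] H)
    (hTcont : ∀ x : H, ContinuousOn (fun t : ℝ => T t x) (Ici (0 : ℝ)))
    (N : ℕ)
    (C : ℝ) (hC : 0 < C)
    -- adjoint square function estimate (estimate (3.2) for A*)
    (hQstar : ∀ h : H, ∫⁻ s in Ioi (0 : ℝ),
        ENNReal.ofReal (‖adjoint (T s) h - adjoint (T ((N : ℝ) * s)) h‖ ^ 2 / s)
      ≤ ENNReal.ofReal (C * ‖h‖ ^ 2))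
    (f : ℝ → H)
    (hfm : AEStronglyMeasurable f (volume.restrict (Ioi (0 : ℝ))))
    (hfL2 : IntegrableOn (fun s : ℝ => s * ‖f s‖ ^ 2) (Ioi 0)) :
    (∀ h : H,
      IntegrableOn (fun s : ℝ =>
        (inner ℂ (f s) (adjoint (T s) h - adjoint (T ((N : ℝ) * s)) h) : ℂ)) (Ioi 0) ∧
      ∫ s in Ioi (0 : ℝ),
          ‖(inner ℂ (f s) (adjoint (T s) h - adjoint (T ((N : ℝ) * s)) h) : ℂ)‖
        ≤ Real.sqrt C * Real.sqrt (∫ s in Ioi (0 : ℝ), s * ‖f s‖ ^ 2) * ‖h‖) ∧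
    ((∀ h : H, IntegrableOn (fun s : ℝ => (inner ℂ (T s (f s)) h : ℂ)) (Ioi 0)) →
      ∀ h : H,
        IntegrableOn (fun s : ℝ => (inner ℂ (T ((N : ℝ) * s) (f s)) h : ℂ)) (Ioi 0) ∧
        ∫ s in Ioi (0 : ℝ), (inner ℂ (T ((N : ℝ) * s) (f s)) h : ℂ)
          = (∫ s in Ioi (0 : ℝ), (inner ℂ (T s (f s)) h : ℂ))
            - ∫ s in Ioi (0 : ℝ),
                (inner ℂ (f s) (adjoint (T s) h - adjoint (T ((N : ℝ) * s)) h) : ℂ)) := by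
  have hT_meas : ∀ c : ℝ, 0 ≤ c →
      AEStronglyMeasurable (fun s => T (c * s) (f s)) (volume.restrict (Ioi 0)) := fun c hc =>
    hfm.clm_apply_of_forall fun x => (((hTcont x).comp (continuous_const_mul c).continuousOn
      fun s (hs : 0 ≤ s) => mul_nonneg hc hs).mono Ioi_subset_Ici_self).aestronglyMeasurable
      measurableSet_Ioi
  have hinner : ∀ h s, (inner ℂ (f s) (adjoint (T s) h - adjoint (T ((N : ℝ) * s)) h) : ℂ)
      = inner ℂ (T s (f s)) h - inner ℂ (T ((N : ℝ) * s) (f s)) h := fun h s => by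
    rw [inner_sub_right, adjoint_inner_right, adjoint_inner_right]
  have part_a : ∀ h : H,
      IntegrableOn (fun s : ℝ =>
        (inner ℂ (f s) (adjoint (T s) h - adjoint (T ((N : ℝ) * s)) h) : ℂ)) (Ioi 0) ∧
      ∫ s in Ioi (0 : ℝ),
          ‖(inner ℂ (f s) (adjoint (T s) h - adjoint (T ((N : ℝ) * s)) h) : ℂ)‖
        ≤ √C * √(∫ s in Ioi (0 : ℝ), s * ‖f s‖ ^ 2) * ‖h‖ := fun h => by
    have hmeas : AEStronglyMeasurable (fun s : ℝ =>
        (inner ℂ (f s) (adjoint (T s) h - adjoint (T ((N : ℝ) * s)) h) : ℂ))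
        (volume.restrict (Ioi 0)) := by
      simp only [hinner]
      simpa only [one_mul, Pi.sub_def] using
        ((hT_meas 1 zero_le_one).inner aestronglyMeasurable_const).sub
          ((hT_meas N N.cast_nonneg).inner aestronglyMeasurable_const)
    obtain ⟨hint, hle⟩ := integrableOn_Ioi_and_integral_norm_le_of_norm_le_mul hmeas hfm hfL2
      ((hQstar h).trans_lt ENNReal.ofReal_lt_top).ne fun s => norm_inner_le_norm _ _
    refine ⟨hint, hle.trans ?_⟩
    calc _ ≤ √(∫ s in Ioi (0 : ℝ), s * ‖f s‖ ^ 2) * √(C * ‖h‖ ^ 2) := by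
          gcongr
          exact ENNReal.toReal_le_of_le_ofReal (by positivity) (hQstar h)
      _ = √C * √(∫ s in Ioi (0 : ℝ), s * ‖f s‖ ^ 2) * ‖h‖ := by
          rw [Real.sqrt_mul hC.le, Real.sqrt_sq (norm_nonneg h)]
          ring
  refine ⟨part_a, fun hint h => ?_⟩
  have hsplit : (fun s => (inner ℂ (T ((N : ℝ) * s) (f s)) h : ℂ)) = fun s =>
      inner ℂ (T s (f s)) h - inner ℂ (f s) (adjoint (T s) h - adjoint (T ((N : ℝ) * s)) h) := by
    simp only [hinner, sub_sub_cancel]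
  rw [hsplit]
  exact ⟨(hint h).sub (part_a h).1, integral_sub (hint h) (part_a h).1⟩

/-- Reduction of weak convergence from `N = 1` to general `N`: under the adjoint square
function estimate `∫₀^∞ ‖T(s)* h - T(Ns)* h‖² ds/s ≤ C ‖h‖²`, for strongly measurable
`f` with `∫₀^∞ s ‖f(s)‖² ds < ∞`:
(a) for every `h ∈ H` the function `s ↦ ⟨f(s), T(s)* h - T(Ns)* h⟩` is integrable on
`(0,∞)` with `∫₀^∞ |⟨f(s), T(s)* h - T(Ns)* h⟩| ds ≤ √C (∫₀^∞ s‖f(s)‖² ds)^{1/2} ‖h‖`;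
(b) consequently, if for every `h` the function `s ↦ ⟨T(s) f(s), h⟩` is integrable on
`(0,∞)`, then so is `s ↦ ⟨T(Ns) f(s), h⟩`, and
`∫₀^∞ ⟨T(Ns) f(s), h⟩ ds = ∫₀^∞ ⟨T(s) f(s), h⟩ ds - ∫₀^∞ ⟨f(s), T(s)* h - T(Ns)* h⟩ ds`. -/
theorem weak_convergence_reduction
    {H : Type*} [NormedAddCommGroup H] [InnerProductSpace ℂ H] [CompleteSpace H]
    (T : ℝ → H →L[ℂ] H)
    (hT0 : T 0 = ContinuousLinearMap.id ℂ H)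
    (hTadd : ∀ s t : ℝ, 0 ≤ s → 0 ≤ t → T (s + t) = (T s).comp (T t))
    (hTcont : ∀ x : H, ContinuousOn (fun t : ℝ => T t x) (Ici (0 : ℝ)))
    (N : ℕ) (hN : 1 ≤ N)
    (C : ℝ) (hC : 0 < C)
    -- adjoint square function estimate (estimate (3.2) for A*)
    (hQstar : ∀ h : H, ∫⁻ s in Ioi (0 : ℝ),
        ENNReal.ofReal (‖adjoint (T s) h - adjoint (T ((N : ℝ) * s)) h‖ ^ 2 / s)
      ≤ ENNReal.ofReal (C * ‖h‖ ^ 2))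
    (f : ℝ → H)
    (hfm : AEStronglyMeasurable f (volume.restrict (Ioi (0 : ℝ))))
    (hfL2 : IntegrableOn (fun s : ℝ => s * ‖f s‖ ^ 2) (Ioi 0)) :
    (∀ h : H,
      IntegrableOn (fun s : ℝ =>
        (inner ℂ (f s) (adjoint (T s) h - adjoint (T ((N : ℝ) * s)) h) : ℂ)) (Ioi 0) ∧
      ∫ s in Ioi (0 : ℝ),
          ‖(inner ℂ (f s) (adjoint (T s) h - adjoint (T ((N : ℝ) * s)) h) : ℂ)‖
        ≤ Real.sqrt C * Real.sqrt (∫ s in Ioi (0 : ℝ), s * ‖f s‖ ^ 2) * ‖h‖) ∧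
    ((∀ h : H, IntegrableOn (fun s : ℝ => (inner ℂ (T s (f s)) h : ℂ)) (Ioi 0)) →
      ∀ h : H,
        IntegrableOn (fun s : ℝ => (inner ℂ (T ((N : ℝ) * s) (f s)) h : ℂ)) (Ioi 0) ∧
        ∫ s in Ioi (0 : ℝ), (inner ℂ (T ((N : ℝ) * s) (f s)) h : ℂ)
          = (∫ s in Ioi (0 : ℝ), (inner ℂ (T s (f s)) h : ℂ))
            - ∫ s in Ioi (0 : ℝ),
                (inner ℂ (f s) (adjoint (T s) h - adjoint (T ((N : ℝ) * s)) h) : ℂ)) :=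
  weak_convergence_reduction_general T hTcont N C hC hQstar f hfm hfL2
end
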